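/- arXiv:1312.2186 — 12 statements merged into one kernel-verified Lean document; each statement's English description precedes it below -/
import Mathlib

section
/- Let g be a finite-dimensional real Lie algebra with an inner product ⟨·,·⟩, and call a nonzero X ∈ g geodesic if ⟨X,[X,Y]⟩ = 0 for all Y ∈ g. If g admits a basis consisting of geodesic elements that is orthonormal, then g is unimodular, i.e. Tr(ad X) = 0 for every X ∈ g. -/
namespace Module.Basis

variable {R M ι : Type*} [CommSemiring R] [AddCommMonoid M] [Module R M] [DecidableEq ι]

theorem eq_toDual_of_apply_basis (b : Basis ι R M) {B : M →ₗ[R] M →ₗ[R] R}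
    (hB : ∀ i j, B (b i) (b j) = if i = j then 1 else 0) : B = b.toDual :=
  b.ext fun i ↦ b.ext fun j ↦ by rw [hB, b.toDual_apply]

end Module.Basis

theorem LinearMap.trace_eq_sum_toDual_apply {R M ι : Type*} [CommRing R] [AddCommGroup M]
    [Module R M] [Fintype ι] [DecidableEq ι] (b : Module.Basis ι R M) (f : M →ₗ[R] M) :
    trace R M f = ∑ i, b.toDual (b i) (f (b i)) := by
  rw [trace_eq_matrix_trace R b, Matrix.trace]
  exact Fintype.sum_congr _ _ fun i ↦ by
    rw [Matrix.diag_apply, toMatrix_apply, b.toDual_apply_right]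

theorem orthonormal_geodesic_basis_unimodular_general
    {L : Type*} [LieRing L] [LieAlgebra ℝ L]
    (B : L →ₗ[ℝ] L →ₗ[ℝ] ℝ)
    {ι : Type*} [Fintype ι] [DecidableEq ι] (b : Module.Basis ι ℝ L)
    (horth : ∀ i j, B (b i) (b j) = if i = j then (1 : ℝ) else 0)
    (hgeo : ∀ i, ∀ Y : L, B (b i) ⁅b i, Y⁆ = 0) :
    ∀ X : L, LinearMap.trace ℝ L (LieAlgebra.ad ℝ L X) = 0 := by
  intro X
  rw [LinearMap.trace_eq_sum_toDual_apply b, ← b.eq_toDual_of_apply_basis horth]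
  refine Finset.sum_eq_zero fun i _ ↦ ?_
  rw [LieAlgebra.ad_apply, ← lie_skew, map_neg, hgeo, neg_zero]

/-- If a finite-dimensional real Lie algebra, equipped with an inner product
(a symmetric positive-definite bilinear form `B`), admits a basis consisting of
geodesic elements that is orthonormal, then the Lie algebra is unimodular:
`Tr (ad X) = 0` for every `X`. -/
theorem orthonormal_geodesic_basis_unimodular
    {L : Type*} [LieRing L] [LieAlgebra ℝ L] [Module.Finite ℝ L]
    (B : L →ₗ[ℝ] L →ₗ[ℝ] ℝ)
    (hsymm : ∀ x y : L, B x y = B y x)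
    (hpos : ∀ x : L, x ≠ 0 → 0 < B x x)
    {ι : Type*} [Fintype ι] [DecidableEq ι] (b : Module.Basis ι ℝ L)
    (horth : ∀ i j, B (b i) (b j) = if i = j then (1 : ℝ) else 0)
    (hnz : ∀ i, b i ≠ 0)
    (hgeo : ∀ i, ∀ Y : L, B (b i) ⁅b i, Y⁆ = 0) :
    ∀ X : L, LinearMap.trace ℝ L (LieAlgebra.ad ℝ L X) = 0 :=
  orthonormal_geodesic_basis_unimodular_general B b horth hgeo
end

section
/- Let A_n be the Lie algebra of dimension n+1 with underlying vector space ℝ·X ⊕ ℝⁿ, where ℝⁿ is abelian and [X,Y] = Y for all Y ∈ ℝⁿ. For every inner product on A_n, every geodesic element is orthogonal to the ideal ℝⁿ; consequently A_n has no basis of geodesic elements for any inner product. -/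
/-!
Write a geodesic element as `Z = a • X + v` with `v ∈ H`. Since `H` is abelian and `ad X` is the
identity on `H`, `⁅Z, Y⁆ = a • Y` for `Y ∈ H`, so geodesicity gives `a * B Z Y = 0`. If `a = 0`
then `Z ∈ H` and `⁅Z, X⁆ = -Z`, so geodesicity gives `B Z Z = 0`, impossible for `Z ≠ 0`.
Hence geodesic elements are orthogonal to `H`, and a basis of them would make every `Y ∈ H`
orthogonal to all of `L`, in particular to itself.
-/

namespace LieAlgebra

variable {K L : Type*} [Field K] [LieRing L] [LieAlgebra K L]

def IsGeodesic (B : L →ₗ[K] L →ₗ[K] K) (Z : L) : Prop :=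
  Z ≠ 0 ∧ ∀ W : L, B Z ⁅Z, W⁆ = 0

lemma lie_smul_add_of_mem {X : L} {H : Submodule K L}
    (habel : ∀ Y ∈ H, ∀ Z ∈ H, ⁅Y, Z⁆ = (0 : L)) (hact : ∀ Y ∈ H, ⁅X, Y⁆ = Y)
    (a : K) {v Y : L} (hv : v ∈ H) (hY : Y ∈ H) :
    ⁅a • X + v, Y⁆ = a • Y := by
  rw [add_lie, smul_lie, hact Y hY, habel v hv Y hY, add_zero]

lemma IsGeodesic.apply_eq_zero_of_mem {X : L} {H : Submodule K L}
    (hspan : Submodule.span K {X} ⊔ H = ⊤)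
    (habel : ∀ Y ∈ H, ∀ Z ∈ H, ⁅Y, Z⁆ = (0 : L)) (hact : ∀ Y ∈ H, ⁅X, Y⁆ = Y)
    {B : L →ₗ[K] L →ₗ[K] K} (hB : ∀ x : L, B x x = 0 → x = 0)
    {Z : L} (hZ : IsGeodesic B Z) {Y : L} (hY : Y ∈ H) : B Z Y = 0 := by
  obtain ⟨hZ0, hgeo⟩ := hZ
  obtain ⟨u, hu, v, hv, rfl⟩ := Submodule.mem_sup.mp (hspan ▸ Submodule.mem_top : Z ∈ _)
  obtain ⟨a, rfl⟩ := Submodule.mem_span_singleton.mp hu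
  have hscaled : a * B (a • X + v) Y = 0 := by
    simpa [lie_smul_add_of_mem habel hact a hv hY] using hgeo Y
  rcases mul_eq_zero.mp hscaled with rfl | h
  · rw [zero_smul, zero_add] at hZ0 hgeo ⊢
    have hvX : ⁅v, X⁆ = -v := by rw [← lie_skew, hact v hv]
    have hvv : B v v = 0 := by simpa [hvX] using hgeo X
    exact absurd (hB v hvv) hZ0
  · exact h

end LieAlgebra

lemma LinearMap.eq_zero_of_forall_basis_apply_eq_zero {K M ι : Type*} [Field K]
    [AddCommGroup M] [Module K M] {B : M →ₗ[K] M →ₗ[K] K}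
    (hB : ∀ x : M, B x x = 0 → x = 0) (b : Module.Basis ι K M) {Y : M}
    (hY : ∀ i, B (b i) Y = 0) : Y = 0 := by
  have hflip : B.flip Y = 0 := b.ext fun i => by simpa using hY i
  exact hB Y (by simpa using LinearMap.congr_fun hflip Y)

theorem suspension_id_no_geodesic_basis_general
    {L : Type*} [LieRing L] [LieAlgebra ℝ L]
    (X : L) (H : Submodule ℝ L)
    (hH : H ≠ ⊥)
    (hspan : Submodule.span ℝ {X} ⊔ H = ⊤)
    (habel : ∀ Y ∈ H, ∀ Z ∈ H, ⁅Y, Z⁆ = (0 : L))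
    (hact : ∀ Y ∈ H, ⁅X, Y⁆ = Y)
    (B : L →ₗ[ℝ] L →ₗ[ℝ] ℝ)
    (hpos : ∀ x : L, x ≠ 0 → 0 < B x x) :
    (∀ Z : L, Z ≠ 0 → (∀ W : L, B Z ⁅Z, W⁆ = 0) → ∀ Y ∈ H, B Z Y = 0) ∧
    ¬ ∃ b : Module.Basis (Fin (Module.finrank ℝ L)) ℝ L,
        ∀ i, b i ≠ 0 ∧ ∀ W : L, B (b i) ⁅b i, W⁆ = 0 := by
  have hB : ∀ x : L, B x x = 0 → x = 0 := fun x hx =>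
    by_contra fun hx0 => (hpos x hx0).ne' hx
  have horth : ∀ Z : L, Z ≠ 0 → (∀ W : L, B Z ⁅Z, W⁆ = 0) → ∀ Y ∈ H, B Z Y = 0 :=
    fun Z hZ hgeo _ hY =>
      LieAlgebra.IsGeodesic.apply_eq_zero_of_mem hspan habel hact hB ⟨hZ, hgeo⟩ hY
  refine ⟨horth, ?_⟩
  rintro ⟨b, hb⟩
  refine hH ((Submodule.eq_bot_iff H).mpr fun Y hY => ?_)
  exact LinearMap.eq_zero_of_forall_basis_apply_eq_zero hB b fun i =>
    horth _ (hb i).1 (hb i).2 Y hY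

/-- Let `A_n = ℝ·X ⊕ ℝⁿ` be the suspension of the identity derivation of the
abelian algebra `ℝⁿ` (here `H` plays the role of the abelian ideal `ℝⁿ`, with
`⁅X, Y⁆ = Y` for `Y ∈ H`, and `n ≥ 1`, i.e. `H ≠ ⊥`).  For every inner product
`B`, every geodesic element is orthogonal to `H`; consequently there is no
basis of `A_n` consisting of geodesic elements. -/
theorem suspension_id_no_geodesic_basis
    {L : Type*} [LieRing L] [LieAlgebra ℝ L] [Module.Finite ℝ L]
    (X : L) (H : Submodule ℝ L)
    (hXH : X ∉ H) (hH : H ≠ ⊥)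
    (hspan : Submodule.span ℝ {X} ⊔ H = ⊤)
    (habel : ∀ Y ∈ H, ∀ Z ∈ H, ⁅Y, Z⁆ = (0 : L))
    (hact : ∀ Y ∈ H, ⁅X, Y⁆ = Y)
    (B : L →ₗ[ℝ] L →ₗ[ℝ] ℝ)
    (hsymm : ∀ x y : L, B x y = B y x)
    (hpos : ∀ x : L, x ≠ 0 → 0 < B x x) :
    (∀ Z : L, Z ≠ 0 → (∀ W : L, B Z ⁅Z, W⁆ = 0) → ∀ Y ∈ H, B Z Y = 0) ∧
    ¬ ∃ b : Module.Basis (Fin (Module.finrank ℝ L)) ℝ L,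
        ∀ i, b i ≠ 0 ∧ ∀ W : L, B (b i) ⁅b i, W⁆ = 0 :=
  suspension_id_no_geodesic_basis_general X H hH hspan habel hact B hpos
end

section
/- Let g be a finite-dimensional real Lie algebra with inner product ⟨·,·⟩ and nontrivial center z. If the quotient Lie algebra g/z possesses an inner product with a basis of geodesic elements, then so does g. -/
/-! Choose a complement `V` of the center `z`, so that `V ≅ L/z`, and put on `L` the inner product
`B(x, y) = B_q(π x, π y) + C(P x, P y)`, where `π : L → L/z` is the quotient map, `P` is the
projection onto `z` along `V` and `C` is any inner product on `L`. Central elements are geodesic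
for every form. A lift `X ∈ V` of a geodesic `x` of `L/z` is geodesic, because `P X = 0` and
`π [X, Y] = [x, π Y]` give `B(X, [X, Y]) = B_q(x, [x, π Y]) = 0`. Hence the geodesics of `L`
span `z + V = L`, and a spanning set contains a basis. -/

open Module Submodule Matrix

section InnerProductForm

variable {K V W M : Type*} [Field K] [LinearOrder K]
  [AddCommGroup V] [Module K V] [AddCommGroup W] [Module K W] [AddCommGroup M] [Module K M]

def IsInnerProductForm (B : V →ₗ[K] V →ₗ[K] K) : Prop :=
  (∀ x y, B x y = B y x) ∧ ∀ x, x ≠ 0 → 0 < B x x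

namespace IsInnerProductForm

variable {B : V →ₗ[K] V →ₗ[K] K} {C : W →ₗ[K] W →ₗ[K] K}

theorem nonneg (hB : IsInnerProductForm B) (x : V) : 0 ≤ B x x := by
  rcases eq_or_ne x 0 with rfl | hx
  · simp
  · exact (hB.2 x hx).le

theorem compl₁₂ (hB : IsInnerProductForm B) {f : M →ₗ[K] V} (hf : Function.Injective f) :
    IsInnerProductForm (B.compl₁₂ f f) :=
  ⟨fun x y => hB.1 (f x) (f y), fun x hx => hB.2 (f x) ((map_ne_zero_iff f hf).2 hx)⟩

theorem add_compl₁₂ [IsStrictOrderedRing K] (hB : IsInnerProductForm B)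
    (hC : IsInnerProductForm C) {f : M →ₗ[K] V} {g : M →ₗ[K] W}
    (hfg : ∀ x, f x = 0 → g x = 0 → x = 0) :
    IsInnerProductForm (B.compl₁₂ f f + C.compl₁₂ g g) := by
  refine ⟨fun x y => by simp [hB.1 (f x), hC.1 (g x)], fun x hx => ?_⟩
  simp only [LinearMap.add_apply, LinearMap.compl₁₂_apply]
  by_cases hf : f x = 0
  · have hg : g x ≠ 0 := fun hg => hx (hfg x hf hg)
    exact add_pos_of_nonneg_of_pos (hB.nonneg _) (hC.2 _ hg)
  · exact add_pos_of_pos_of_nonneg (hB.2 _ hf) (hC.nonneg _)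

end IsInnerProductForm

theorem isInnerProductForm_dotProductBilin [IsStrictOrderedRing K] (ι : Type*) [Fintype ι] :
    IsInnerProductForm (dotProductBilin K K : (ι → K) →ₗ[K] (ι → K) →ₗ[K] K) := by
  refine ⟨fun v w => dotProduct_comm v w, fun v hv => ?_⟩
  have hnonneg : 0 ≤ v ⬝ᵥ v := Finset.sum_nonneg fun i _ => mul_self_nonneg (v i)
  exact hnonneg.lt_of_ne' (dotProduct_self_eq_zero.not.2 hv)

variable (K V) in
theorem exists_isInnerProductForm [IsStrictOrderedRing K] [FiniteDimensional K V] :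
    ∃ B : V →ₗ[K] V →ₗ[K] K, IsInnerProductForm B :=
  let e := (finBasis K V).equivFun
  ⟨_, (isInnerProductForm_dotProductBilin _).compl₁₂ (f := e.toLinearMap) e.injective⟩

end InnerProductForm

theorem Module.exists_basis_forall_mem_of_span_eq_top {K V : Type*} [DivisionRing K]
    [AddCommGroup V] [Module K V] [FiniteDimensional K V] {s : Set V} (hs : span K s = ⊤) :
    ∃ b : Basis (Fin (finrank K V)) K V, ∀ i, b i ∈ s := by
  let b := Basis.ofSpan hs.ge
  refine ⟨b.reindex (b.indexEquiv (finBasis K V)), fun i => ?_⟩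
  rw [Basis.reindex_apply]
  exact Basis.ofSpan_subset hs.ge (Set.mem_range_self _)

section Geodesic

variable {K L W : Type*} [CommRing K] [LieRing L] [LieAlgebra K L] [AddCommGroup W] [Module K W]

def IsGeodesic (B : L →ₗ[K] L →ₗ[K] K) (X : L) : Prop :=
  X ≠ 0 ∧ ∀ Y, B X ⁅X, Y⁆ = 0

theorem isGeodesic_of_mem_center {B : L →ₗ[K] L →ₗ[K] K} {X : L}
    (hX : X ∈ LieAlgebra.center K L) (h0 : X ≠ 0) : IsGeodesic B X := by
  refine ⟨h0, fun Y => ?_⟩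
  rw [← lie_skew, hX Y, neg_zero, map_zero]

theorem isGeodesic_of_isGeodesic_mk {I : LieIdeal K L} {Bq : (L ⧸ I) →ₗ[K] (L ⧸ I) →ₗ[K] K}
    {C : W →ₗ[K] W →ₗ[K] K} {P : L →ₗ[K] W} {X : L} (hPX : P X = 0)
    (hX : IsGeodesic Bq (LieSubmodule.Quotient.mk X)) :
    IsGeodesic (Bq.compl₁₂ I.toSubmodule.mkQ I.toSubmodule.mkQ + C.compl₁₂ P P) X := by
  refine ⟨fun h => hX.1 (by simp [h]), fun Y => ?_⟩
  simp only [LinearMap.add_apply, LinearMap.compl₁₂_apply, hPX, map_zero, LinearMap.zero_apply,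
    add_zero]
  exact hX.2 (LieSubmodule.Quotient.mk Y)

end Geodesic

theorem span_setOf_isGeodesic_eq_top_of_quotient {K L W : Type*} [Field K] [LieRing L]
    [LieAlgebra K L] [AddCommGroup W] [Module K W]
    {Bq : (L ⧸ LieAlgebra.center K L) →ₗ[K] (L ⧸ LieAlgebra.center K L) →ₗ[K] K}
    (hq : span K {Y | IsGeodesic Bq Y} = ⊤) {V : Submodule K L}
    (hV : IsCompl (LieAlgebra.center K L).toSubmodule V) (C : W →ₗ[K] W →ₗ[K] K)
    {P : L →ₗ[K] W} (hP : ∀ X ∈ V, P X = 0) :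
    span K {X | IsGeodesic (Bq.compl₁₂ (LieAlgebra.center K L).toSubmodule.mkQ
      (LieAlgebra.center K L).toSubmodule.mkQ + C.compl₁₂ P P) X} = ⊤ := by
  set z := (LieAlgebra.center K L).toSubmodule
  set B := Bq.compl₁₂ z.mkQ z.mkQ + C.compl₁₂ P P
  set lifts := {X | X ∈ V ∧ IsGeodesic Bq (LieSubmodule.Quotient.mk X)}
  have hz : z ≤ span K {X | IsGeodesic B X} := by
    intro X hX
    rcases eq_or_ne X 0 with rfl | h0
    · exact zero_mem _
    · exact subset_span (isGeodesic_of_mem_center hX h0)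
  have hlifts : span K lifts ≤ span K {X | IsGeodesic B X} :=
    span_mono fun X hX => isGeodesic_of_isGeodesic_mk (hP X hX.1) hX.2
  have hlifts_top : z ⊔ span K lifts = ⊤ := by
    rw [← map_mkQ_eq_top, map_span, eq_top_iff, ← hq]
    refine span_mono fun Y hY => ?_
    have hmk := mk_quotientEquivOfIsCompl_apply hV Y
    exact ⟨_, ⟨SetLike.coe_mem _, by rwa [← hmk] at hY⟩, hmk⟩
  exact eq_top_iff.2 (hlifts_top ▸ sup_le hz hlifts)

theorem geodesic_basis_of_quotient_center_general
    {L : Type*} [LieRing L] [LieAlgebra ℝ L] [Module.Finite ℝ L]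
    (hq : ∃ B : (L ⧸ LieAlgebra.center ℝ L) →ₗ[ℝ] (L ⧸ LieAlgebra.center ℝ L) →ₗ[ℝ] ℝ,
        (∀ x y, B x y = B y x) ∧ (∀ x, x ≠ 0 → 0 < B x x) ∧
        ∃ b : Module.Basis (Fin (Module.finrank ℝ (L ⧸ LieAlgebra.center ℝ L))) ℝ
            (L ⧸ LieAlgebra.center ℝ L),
          ∀ i, b i ≠ 0 ∧ ∀ W, B (b i) ⁅b i, W⁆ = 0) :
    ∃ B : L →ₗ[ℝ] L →ₗ[ℝ] ℝ,
      (∀ x y, B x y = B y x) ∧ (∀ x, x ≠ 0 → 0 < B x x) ∧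
      ∃ b : Module.Basis (Fin (Module.finrank ℝ L)) ℝ L,
        ∀ i, b i ≠ 0 ∧ ∀ W, B (b i) ⁅b i, W⁆ = 0 := by
  obtain ⟨Bq, hBq_symm, hBq_pos, bq, hbq⟩ := hq
  set z := (LieAlgebra.center ℝ L).toSubmodule
  obtain ⟨V, hV⟩ := z.exists_isCompl
  obtain ⟨C, hC⟩ := exists_isInnerProductForm ℝ L
  set P := z.projection V hV
  set B := Bq.compl₁₂ z.mkQ z.mkQ + C.compl₁₂ P P
  have hB : IsInnerProductForm B := by
    refine IsInnerProductForm.add_compl₁₂ ⟨hBq_symm, hBq_pos⟩ hC fun x hx hPx => ?_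
    have hxz : x ∈ z := (Quotient.mk_eq_zero z).1 hx
    have hxV : x ∈ V := (projection_apply_eq_zero_iff hV).1 hPx
    exact (disjoint_def.1 hV.disjoint) x hxz hxV
  have hspan : span ℝ {X | IsGeodesic B X} = ⊤ := by
    refine span_setOf_isGeodesic_eq_top_of_quotient ?_ hV C
      fun X hX => (projection_apply_eq_zero_iff hV).2 hX
    exact eq_top_mono (span_mono (Set.range_subset_iff.2 hbq)) bq.span_eq
  obtain ⟨b, hb⟩ := exists_basis_forall_mem_of_span_eq_top hspan
  exact ⟨B, hB.1, hB.2, b, hb⟩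

/-- If a finite-dimensional real Lie algebra `L` has nontrivial center `z`, and the
quotient `L ⧸ z` possesses an inner product with a basis of geodesic elements,
then so does `L`. -/
theorem geodesic_basis_of_quotient_center
    {L : Type*} [LieRing L] [LieAlgebra ℝ L] [Module.Finite ℝ L]
    (hz : LieAlgebra.center ℝ L ≠ ⊥)
    (hq : ∃ B : (L ⧸ LieAlgebra.center ℝ L) →ₗ[ℝ] (L ⧸ LieAlgebra.center ℝ L) →ₗ[ℝ] ℝ,
        (∀ x y, B x y = B y x) ∧ (∀ x, x ≠ 0 → 0 < B x x) ∧
        ∃ b : Module.Basis (Fin (Module.finrank ℝ (L ⧸ LieAlgebra.center ℝ L))) ℝ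
            (L ⧸ LieAlgebra.center ℝ L),
          ∀ i, b i ≠ 0 ∧ ∀ W, B (b i) ⁅b i, W⁆ = 0) :
    ∃ B : L →ₗ[ℝ] L →ₗ[ℝ] ℝ,
      (∀ x y, B x y = B y x) ∧ (∀ x, x ≠ 0 → 0 < B x x) ∧
      ∃ b : Module.Basis (Fin (Module.finrank ℝ L)) ℝ L,
        ∀ i, b i ≠ 0 ∧ ∀ W, B (b i) ⁅b i, W⁆ = 0 :=
  geodesic_basis_of_quotient_center_general hq
end

section
/- Let g be a Lie algebra of the form g = ℝ·Y ⊕ h where h is an abelian ideal and A = ad(Y)|_h ∈ End(h) is not a real multiple of the identity. Then there exists a symmetric positive-definite operator G on h (with respect to a fixed background inner product ⟨·,·⟩₀) such that the quadratic form φ(X) = ⟨GAX, X⟩₀ on h is indefinite. -/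
/-!
Since `A` is not scalar, some unit vector `e₁` is not an eigenvector, so in an orthonormal pair
`e₁, e₂` we have `A e₁ = α e₁ + β e₂` with `β ≠ 0`. Take for `G` the operator whose Gram matrix on
`span {e₁, e₂}` is `!![1, t; t, t² + s]` (with `s > 0`, so positive definite) and which is the
identity on the orthogonal complement. For `t = -α / β` the form `X ↦ ⟪G (A X), X⟫` vanishes at
`e₁`, so along the line `p • e₁ + e₂` it is affine in `p`; for a suitable `s` it is non-constant and
hence takes both signs.
-/

open scoped RealInnerProductSpace

section

variable {V : Type*} [NormedAddCommGroup V] [InnerProductSpace ℝ V]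

lemma LinearMap.exists_inner_self_eq_one_forall_smul_ne_apply (A : V →ₗ[ℝ] V)
    (hA : ∀ c : ℝ, A ≠ c • LinearMap.id) :
    ∃ e : V, ⟪e, e⟫ = 1 ∧ ∀ a : ℝ, a • e ≠ A e := by
  obtain ⟨v, hv⟩ : ∃ v, LinearIndependent ℝ ![v, A v] := by
    by_contra! h
    obtain ⟨c, hc⟩ := LinearMap.exists_eq_smul_id_of_forall_notLinearIndependent h
    exact hA c hc
  have hv₀ : v ≠ 0 := hv.ne_zero 0
  have hnv : ‖v‖⁻¹ ≠ 0 := inv_ne_zero (norm_ne_zero_iff.mpr hv₀)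
  rw [LinearIndependent.pair_iff' hv₀] at hv
  refine ⟨‖v‖⁻¹ • v, ?_, fun a ha => hv a ?_⟩
  · rw [real_inner_smul_left, real_inner_smul_right, real_inner_self_eq_norm_sq]
    field_simp [norm_ne_zero_iff.mpr hv₀]
  · apply smul_right_injective V hnv
    simpa only [map_smul, smul_comm a] using ha

lemma exists_orthonormal_eq_smul_add_smul {e₁ u : V} (he₁ : ⟪e₁, e₁⟫ = 1)
    (hu : ∀ a : ℝ, a • e₁ ≠ u) :
    ∃ e₂ : V, ⟪e₂, e₂⟫ = 1 ∧ ⟪e₁, e₂⟫ = 0 ∧ ∃ α β : ℝ, β ≠ 0 ∧ u = α • e₁ + β • e₂ := by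
  set w := u - ⟪e₁, u⟫ • e₁ with hw
  have hw₀ : ‖w‖ ≠ 0 := norm_ne_zero_iff.mpr fun h => hu ⟪e₁, u⟫ (sub_eq_zero.mp h).symm
  refine ⟨‖w‖⁻¹ • w, ?_, ?_, ⟪e₁, u⟫, ‖w‖, hw₀, ?_⟩
  · rw [real_inner_smul_left, real_inner_smul_right, real_inner_self_eq_norm_sq]
    field_simp
  · rw [real_inner_smul_right, hw, inner_sub_right, real_inner_smul_right, he₁]
    ring
  · rw [smul_inv_smul₀ hw₀, hw]
    abel

/-- The operator with Gram matrix `!![1, t; t, t² + s]` on `span {e₁, e₂}` (for orthonormal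
`e₁, e₂`) that is the identity on its orthogonal complement. -/
noncomputable def planeGram (e₁ e₂ : V) (t s : ℝ) : V →ₗ[ℝ] V where
  toFun x := x + (t * ⟪x, e₁⟫) • e₂ + (t * ⟪x, e₂⟫) • e₁ + ((t ^ 2 + s - 1) * ⟪x, e₂⟫) • e₂
  map_add' x y := by
    simp only [inner_add_left, mul_add, add_smul]
    abel
  map_smul' c x := by
    simp only [real_inner_smul_left, RingHom.id_apply, smul_add, smul_smul]
    ring_nf

variable (e₁ e₂ : V) (t s : ℝ)

lemma inner_planeGram_left (x y : V) :
    ⟪planeGram e₁ e₂ t s x, y⟫ = ⟪x, y⟫ + t * (⟪x, e₁⟫ * ⟪e₂, y⟫ + ⟪x, e₂⟫ * ⟪e₁, y⟫)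
      + (t ^ 2 + s - 1) * ⟪x, e₂⟫ * ⟪e₂, y⟫ := by
  simp only [planeGram, LinearMap.coe_mk, AddHom.coe_mk, inner_add_left, real_inner_smul_left]
  ring

lemma inner_planeGram_comm (x y : V) :
    ⟪planeGram e₁ e₂ t s x, y⟫ = ⟪x, planeGram e₁ e₂ t s y⟫ := by
  rw [real_inner_comm (planeGram e₁ e₂ t s y) x, inner_planeGram_left, inner_planeGram_left,
    real_inner_comm x y, real_inner_comm e₁ y, real_inner_comm e₂ y, real_inner_comm x e₁,
    real_inner_comm x e₂]
  ring

variable {e₁ e₂}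

/-- Completing the square:
`!![1, t; t, t² + s] = !![1, 0; t, 1] * !![1, 0; 0, s] * !![1, t; 0, 1]`. -/
lemma inner_planeGram_self (h₁ : ⟪e₁, e₁⟫ = 1) (h₂ : ⟪e₂, e₂⟫ = 1) (h₁₂ : ⟪e₁, e₂⟫ = 0)
    (x : V) :
    ⟪planeGram e₁ e₂ t s x, x⟫ = ‖x - ⟪e₁, x⟫ • e₁ - ⟪e₂, x⟫ • e₂‖ ^ 2
      + (⟪e₁, x⟫ + t * ⟪e₂, x⟫) ^ 2 + s * ⟪e₂, x⟫ ^ 2 := by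
  rw [← real_inner_self_eq_norm_sq, inner_planeGram_left, real_inner_comm x e₁,
    real_inner_comm x e₂]
  simp only [inner_sub_left, inner_sub_right, real_inner_smul_left, real_inner_smul_right,
    h₁, h₂, h₁₂, real_inner_comm e₁ e₂, real_inner_comm x e₁, real_inner_comm x e₂]
  ring

lemma inner_planeGram_self_pos (h₁ : ⟪e₁, e₁⟫ = 1) (h₂ : ⟪e₂, e₂⟫ = 1) (h₁₂ : ⟪e₁, e₂⟫ = 0)
    (hs : 0 < s) {x : V} (hx : x ≠ 0) :
    0 < ⟪planeGram e₁ e₂ t s x, x⟫ := by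
  rw [inner_planeGram_self t s h₁ h₂ h₁₂]
  set a := ⟪e₁, x⟫
  set b := ⟪e₂, x⟫
  by_contra! hle
  have hr := sq_nonneg ‖x - a • e₁ - b • e₂‖
  have hab := sq_nonneg (a + t * b)
  have hb := mul_nonneg hs.le (sq_nonneg b)
  have hb₀ : b = 0 := by
    have : s * b ^ 2 = 0 := by linarith
    simpa [hs.ne'] using this
  have ha₀ : a = 0 := by
    have : (a + t * b) ^ 2 = 0 := by linarith
    simpa [hb₀] using this
  have hx₀ : ‖x - a • e₁ - b • e₂‖ ^ 2 = 0 := by linarith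
  exact hx (by simpa [ha₀, hb₀] using hx₀)

lemma inner_planeGram_apply_smul_add (h₁ : ⟪e₁, e₁⟫ = 1) (h₂ : ⟪e₂, e₂⟫ = 1)
    (h₁₂ : ⟪e₁, e₂⟫ = 0) (A : V →ₗ[ℝ] V) {β : ℝ} (hA : A e₁ = (-(t * β)) • e₁ + β • e₂)
    (p : ℝ) :
    ⟪planeGram e₁ e₂ t s (A (p • e₁ + e₂)), p • e₁ + e₂⟫ =
      (⟪A e₂, e₁⟫ + t * ⟪A e₂, e₂⟫ + s * β) * p
        + (t * ⟪A e₂, e₁⟫ + (t ^ 2 + s) * ⟪A e₂, e₂⟫) := by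
  rw [inner_planeGram_left, map_add, map_smul, hA]
  simp only [inner_add_left, inner_add_right, real_inner_smul_left, real_inner_smul_right,
    h₁, h₂, h₁₂, real_inner_comm e₁ e₂]
  ring

end

lemma exists_pos_add_mul_ne_zero (c : ℝ) {β : ℝ} (hβ : β ≠ 0) :
    ∃ s : ℝ, 0 < s ∧ c + s * β ≠ 0 := by
  by_cases h : c + 1 * β = 0
  · exact ⟨2, two_pos, fun h₂ => hβ (by linarith)⟩
  · exact ⟨1, one_pos, h⟩

lemma exists_mul_add_eq {L : ℝ} (hL : L ≠ 0) (C y : ℝ) : ∃ p : ℝ, L * p + C = y :=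
  ⟨(y - C) / L, by field_simp; ring⟩

theorem exists_symmetric_posdef_indefinite_general
    {V : Type*} [NormedAddCommGroup V] [InnerProductSpace ℝ V]
    (A : V →ₗ[ℝ] V) (hA : ∀ c : ℝ, A ≠ c • LinearMap.id) :
    ∃ G : V →ₗ[ℝ] V,
      (∀ x y : V, ⟪G x, y⟫ = ⟪x, G y⟫) ∧
      (∀ x : V, x ≠ 0 → 0 < ⟪G x, x⟫) ∧
      (∃ x : V, 0 < ⟪G (A x), x⟫) ∧ (∃ y : V, ⟪G (A y), y⟫ < 0) := by
  obtain ⟨e₁, h₁, he₁⟩ := A.exists_inner_self_eq_one_forall_smul_ne_apply hA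
  obtain ⟨e₂, h₂, h₁₂, α, β, hβ, hAe₁⟩ := exists_orthonormal_eq_smul_add_smul h₁ he₁
  set t := -α / β
  have hAe₁' : A e₁ = (-(t * β)) • e₁ + β • e₂ := by
    rw [hAe₁, div_mul_cancel₀ _ hβ, neg_neg]
  obtain ⟨s, hs, hL⟩ := exists_pos_add_mul_ne_zero (⟪A e₂, e₁⟫ + t * ⟪A e₂, e₂⟫) hβ
  have hq := inner_planeGram_apply_smul_add t s h₁ h₂ h₁₂ A hAe₁'
  set C := t * ⟪A e₂, e₁⟫ + (t ^ 2 + s) * ⟪A e₂, e₂⟫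
  obtain ⟨p, hp⟩ := exists_mul_add_eq hL C 1
  obtain ⟨p', hp'⟩ := exists_mul_add_eq hL C (-1)
  refine ⟨planeGram e₁ e₂ t s, inner_planeGram_comm e₁ e₂ t s,
    fun x hx => inner_planeGram_self_pos t s h₁ h₂ h₁₂ hs hx,
    ⟨p • e₁ + e₂, by rw [hq, hp]; exact one_pos⟩, ⟨p' • e₁ + e₂, by rw [hq, hp']; norm_num⟩⟩

/-- If `A` is an endomorphism of a finite-dimensional real inner-product space
that is not a real multiple of the identity, then there is a symmetric
positive-definite operator `G` such that the quadratic form `X ↦ ⟪G (A X), X⟫₀`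
is indefinite. -/
theorem exists_symmetric_posdef_indefinite
    {V : Type*} [NormedAddCommGroup V] [InnerProductSpace ℝ V] [FiniteDimensional ℝ V]
    (A : V →ₗ[ℝ] V) (hA : ∀ c : ℝ, A ≠ c • LinearMap.id) :
    ∃ G : V →ₗ[ℝ] V,
      (∀ x y : V, ⟪G x, y⟫ = ⟪x, G y⟫) ∧
      (∀ x : V, x ≠ 0 → 0 < ⟪G x, x⟫) ∧
      (∃ x : V, 0 < ⟪G (A x), x⟫) ∧ (∃ y : V, ⟪G (A y), y⟫ < 0) :=
  exists_symmetric_posdef_indefinite_general A hA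
end

section
/- Let V be a finite-dimensional real vector space and φ: V → ℝ an indefinite quadratic form (taking both positive and negative values). Then the zero set {X ∈ V : φ(X) = 0} spans V. -/
theorem exists_ne_roots_of_mul_neg {a c : ℝ} (b : ℝ) (h : a * c < 0) :
    ∃ t₁ t₂ : ℝ, t₁ ≠ t₂ ∧ a * (t₁ * t₁) + b * t₁ + c = 0 ∧ a * (t₂ * t₂) + b * t₂ + c = 0 := by
  have ha : a ≠ 0 := by rintro rfl; simp at h
  have hdisc : 0 < discrim a b c := by rw [discrim]; nlinarith [sq_nonneg b]
  set s := √(discrim a b c)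
  have hs : discrim a b c = s * s := (Real.mul_self_sqrt hdisc.le).symm
  have hs0 : s ≠ 0 := (Real.sqrt_pos.mpr hdisc).ne'
  refine ⟨(-b + s) / (2 * a), (-b - s) / (2 * a), ?_, ?_, ?_⟩
  · rw [Ne, div_left_inj' (mul_ne_zero two_ne_zero ha)]
    intro heq; exact hs0 (by linarith)
  · exact (quadratic_eq_zero_iff ha hs _).mpr (Or.inl rfl)
  · exact (quadratic_eq_zero_iff ha hs _).mpr (Or.inr rfl)

namespace QuadraticMap

variable {V : Type*} [AddCommGroup V] [Module ℝ V] (Q : QuadraticMap ℝ V ℝ)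

theorem map_smul_add (t : ℝ) (v w : V) :
    Q (t • w + v) = Q w * (t * t) + polar Q w v * t + Q v := by
  rw [QuadraticMap.map_add Q, QuadraticMap.map_smul, polar_smul_left, smul_eq_mul, smul_eq_mul]
  ring

/-- The line `t ↦ t • w + v` meets the zero set of `Q` in two distinct points, and these two
points already span `v` and `w`. -/
theorem mem_span_zeroSet_of_mul_neg {v w : V} (h : Q w * Q v < 0) :
    v ∈ Submodule.span ℝ {x | Q x = 0} := by
  set S := Submodule.span ℝ {x | Q x = 0}
  obtain ⟨t₁, t₂, hne, h₁, h₂⟩ := exists_ne_roots_of_mul_neg (polar Q w v) h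
  have hmem : ∀ t, Q w * (t * t) + polar Q w v * t + Q v = 0 → t • w + v ∈ S := fun t ht ↦
    Submodule.subset_span (by rw [Set.mem_ofPred_eq, map_smul_add, ht])
  have hw : w ∈ S := by
    have : (t₁ - t₂) • w ∈ S := by
      rw [sub_smul, ← add_sub_add_right_eq_sub _ _ v]
      exact S.sub_mem (hmem t₁ h₁) (hmem t₂ h₂)
    exact (S.smul_mem_iff (sub_ne_zero.mpr hne)).mp this
  simpa using S.sub_mem (hmem t₁ h₁) (S.smul_mem t₁ hw)

theorem span_zeroSet_eq_top {x y : V} (hx : 0 < Q x) (hy : Q y < 0) :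
    Submodule.span ℝ {v | Q v = 0} = ⊤ := by
  refine Submodule.eq_top_iff'.mpr fun v ↦ ?_
  rcases lt_trichotomy (Q v) 0 with hv | hv | hv
  · exact Q.mem_span_zeroSet_of_mul_neg (mul_neg_of_pos_of_neg hx hv)
  · exact Submodule.subset_span hv
  · exact Q.mem_span_zeroSet_of_mul_neg (mul_neg_of_neg_of_pos hy hv)

end QuadraticMap

theorem zero_set_indefinite_quadratic_spans_general
    {V : Type*} [AddCommGroup V] [Module ℝ V]
    (B : V →ₗ[ℝ] V →ₗ[ℝ] ℝ)
    (hpos : ∃ x : V, 0 < B x x) (hneg : ∃ y : V, B y y < 0) :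
    Submodule.span ℝ {x : V | B x x = 0} = ⊤ := by
  obtain ⟨x, hx⟩ := hpos
  obtain ⟨y, hy⟩ := hneg
  exact (LinearMap.BilinMap.toQuadraticMap B).span_zeroSet_eq_top hx hy

/-- The zero set of an indefinite quadratic form on a finite-dimensional real
vector space spans the whole space. -/
theorem zero_set_indefinite_quadratic_spans
    {V : Type*} [AddCommGroup V] [Module ℝ V] [FiniteDimensional ℝ V]
    (B : V →ₗ[ℝ] V →ₗ[ℝ] ℝ) (hsymm : ∀ x y : V, B x y = B y x)
    (hpos : ∃ x : V, 0 < B x x) (hneg : ∃ y : V, B y y < 0) :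
    Submodule.span ℝ {x : V | B x x = 0} = ⊤ :=
  zero_set_indefinite_quadratic_spans_general B hpos hneg
end

section
/- Suppose g is a nonunimodular Lie algebra having codimension-one ideal isomorphic to the Heisenberg algebra H_{2m+1}. Then for every inner product on g, every geodesic element is orthogonal to the center of H_{2m+1}; in particular g admits no basis of geodesic elements. -/
/-!
If `⁅Y, Z⁆ = 0`, then `ad Y` maps `L` into `H`, and on `H` it is skew for the alternating form
`ω u v = φ ⁅u, v⁆` (with `φ Z ≠ 0`) and vanishes on its radical, which lies in `K ∙ Z`; such
an endomorphism is traceless. Since `ad h` is nilpotent for `h ∈ H`, every `ad T` would then be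
traceless, so nonunimodularity forces `λ ≠ 0`. With `λ ≠ 0`, `Z` lies in the image of `ad X`
for every `X ≠ 0`, so a geodesic `X` satisfies `B X Z = B X ⁅X, W⁆ = 0`, and a basis of
geodesics would give `B Z Z = 0`.
-/

namespace LinearMap

variable {K V : Type*} [Field K] [AddCommGroup V] [Module K V] [FiniteDimensional K V]

theorem BilinForm.trace_eq_zero_of_isSkewAdjoint [CharZero K] {B : LinearMap.BilinForm K V}
    (hB : B.Nondegenerate) {f : V →ₗ[K] V} (hf : B.IsSkewAdjoint f) : trace K V f = 0 := by
  have hconj : (B.toDual hB).conj f = -f.dualMap := by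
    ext φ v
    obtain ⟨u, rfl⟩ := (B.toDual hB).surjective φ
    simp [LinearEquiv.conj_apply, BilinForm.toDual_def, hf u v]
  have h := trace_conj' f (B.toDual hB)
  rw [hconj, map_neg (trace K (Module.Dual K V)), dualMap_def, trace_transpose'] at h
  exact self_eq_neg.mp h.symm

theorem trace_eq_trace_projectionOnto_comp {p q : Submodule K V} (hpq : IsCompl p q)
    {f : V →ₗ[K] V} (hf : p ≤ ker f) :
    trace K V f = trace K q (q.projectionOnto p hpq.symm ∘ₗ f ∘ₗ q.subtype) := by
  have hfac : f = (f ∘ₗ q.subtype) ∘ₗ q.projectionOnto p hpq.symm := by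
    ext x
    conv_lhs => rw [← p.projection_add_projection_eq_self hpq x]
    rw [map_add, hf (p.projection_apply_mem hpq x), zero_add]
    rfl
  rw [← trace_comp_comm', ← hfac]

theorem trace_eq_zero_of_isSkewAdjoint_of_ker_le [CharZero K] {B : V →ₗ[K] V →ₗ[K] K}
    (hB : B.IsRefl) {f : V →ₗ[K] V} (hf : B.IsSkewAdjoint f) (hker : ker B ≤ ker f) :
    trace K V f = 0 := by
  obtain ⟨W, hW⟩ := (ker B).exists_isCompl
  set π := W.projectionOnto (ker B) hW.symm
  have hπ : ∀ x, x - π x ∈ ker B := fun x => by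
    rw [← W.projection_apply, Submodule.projection_eq_self_sub_projection hW, sub_sub_cancel]
    exact (ker B).projection_apply_mem hW x
  have hleft : ∀ x y, B (π x) y = B x y := fun x y => by
    have h := congr($(mem_ker.mp (hπ x)) y)
    rw [map_sub, sub_apply, zero_apply, sub_eq_zero] at h
    exact h.symm
  have hright : ∀ x y, B x (π y) = B x y := fun x y => by
    rw [← sub_eq_zero, ← map_sub, ← neg_sub, map_neg, neg_eq_zero]
    exact hB _ _ (by rw [mem_ker.mp (hπ y)]; rfl)
  rw [trace_eq_trace_projectionOnto_comp hW hker]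
  refine BilinForm.trace_eq_zero_of_isSkewAdjoint
    (nondegenerate_restrict_of_disjoint_orthogonal hB ?_) fun u v => ?_
  · rw [Submodule.disjoint_def]
    intro y hyW hyorth
    have hy : y ∈ ker B := mem_ker.mpr <| ext fun x => by
      rw [← hright, zero_apply]
      exact hB _ _ (hyorth _ (π x).2)
    simpa using hW.disjoint.le_bot ⟨hy, hyW⟩
  · simp only [domRestrict₁₂_apply, comp_apply, Pi.neg_apply, Submodule.subtype_apply, map_neg]
    rw [hleft, hright]
    simpa using hf u v

end LinearMap

open LieAlgebra

section Heisenberg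

variable {K L : Type*} [Field K] [LieRing L] [LieAlgebra K L] {H : LieIdeal K L} {Y Z : L}

theorem exists_eq_smul_add_of_span_sup_eq_top
    (hspan : Submodule.span K {Y} ⊔ H.toSubmodule = ⊤) (T : L) :
    ∃ a : K, ∃ h ∈ H, T = a • Y + h := by
  obtain ⟨_, hu, h, hh, rfl⟩ := Submodule.mem_sup.mp (hspan ▸ Submodule.mem_top : T ∈ _)
  obtain ⟨a, rfl⟩ := Submodule.mem_span_singleton.mp hu
  exact ⟨a, h, hh, rfl⟩

theorem isNilpotent_ad_of_mem (hZcent : ∀ a ∈ H, ⁅Z, a⁆ = 0)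
    (hder : ∀ a ∈ H, ∀ b ∈ H, ∃ c : K, ⁅a, b⁆ = c • Z) {h : L} (hh : h ∈ H) :
    IsNilpotent (ad K L h) := by
  refine ⟨3, LinearMap.ext fun x => ?_⟩
  obtain ⟨c, hc⟩ := hder h hh _ (lie_mem_left K L H h x hh)
  change ⁅h, ⁅h, ⁅h, x⁆⁆⁆ = 0
  rw [hc, lie_smul, ← lie_skew, hZcent h hh, neg_zero, smul_zero]

theorem lie_eq_zero_of_apply_lie_eq_zero (hder : ∀ a ∈ H, ∀ b ∈ H, ∃ c : K, ⁅a, b⁆ = c • Z)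
    {φ : Module.Dual K L} (hφ : φ Z ≠ 0) {u v : L} (hu : u ∈ H) (hv : v ∈ H)
    (huv : φ ⁅u, v⁆ = 0) : ⁅u, v⁆ = 0 := by
  obtain ⟨c, hc⟩ := hder u hu v hv
  rw [hc, map_smul, smul_eq_mul, mul_eq_zero] at huv
  rw [hc, huv.resolve_right hφ, zero_smul]

theorem trace_ad_eq_zero_of_lie_eq_zero [CharZero K] [Module.Finite K L] (hZ : Z ≠ 0)
    (hspan : Submodule.span K {Y} ⊔ H.toSubmodule = ⊤)
    (hder : ∀ a ∈ H, ∀ b ∈ H, ∃ c : K, ⁅a, b⁆ = c • Z)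
    (hcent : ∀ a ∈ H, (∀ b ∈ H, ⁅a, b⁆ = 0) → ∃ c : K, a = c • Z) (hYZ : ⁅Y, Z⁆ = 0) :
    LinearMap.trace K L (ad K L Y) = 0 := by
  obtain ⟨φ, hφ⟩ : ∃ φ : Module.Dual K L, φ Z ≠ 0 := by
    by_contra! h
    exact hZ ((Module.forall_dual_apply_eq_zero_iff K Z).mp h)
  have hmaps : ∀ x, ad K L Y x ∈ H.toSubmodule := fun x => by
    obtain ⟨a, h, hh, rfl⟩ := exists_eq_smul_add_of_span_sup_eq_top hspan x
    rw [ad_apply, lie_add, lie_smul, lie_self, smul_zero, zero_add]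
    exact lie_mem_right K L H Y h hh
  let ω : LinearMap.BilinForm K H.toSubmodule :=
    ((ad K L : L →ₗ[K] Module.End K L).compr₂ φ).domRestrict₁₂ _ _
  have hω : ∀ u v : H.toSubmodule, ω u v = φ ⁅(u : L), v⁆ := fun _ _ => rfl
  rw [← LinearMap.trace_restrict_eq_of_forall_mem _ _ hmaps]
  refine LinearMap.trace_eq_zero_of_isSkewAdjoint_of_ker_le (B := ω)
    (LinearMap.IsAlt.isRefl fun u => by rw [hω, lie_self, map_zero]) (fun u v => ?_) fun u hu => ?_
  · obtain ⟨c, hc⟩ := hder u u.2 v v.2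
    have hleib := leibniz_lie Y (u : L) (v : L)
    rw [hc, lie_smul, hYZ, smul_zero, eq_comm, add_eq_zero_iff_eq_neg] at hleib
    simp only [hω, Pi.neg_apply, LinearMap.coe_restrict_apply, Submodule.coe_neg, lie_neg,
      ad_apply, hleib, map_neg]
  · have hcentral : ∀ b ∈ H, ⁅(u : L), b⁆ = 0 := fun b hb =>
      lie_eq_zero_of_apply_lie_eq_zero hder hφ u.2 hb (congr($hu ⟨b, hb⟩))
    obtain ⟨c, hc⟩ := hcent u u.2 hcentral
    ext
    simp [hc, hYZ]

theorem lie_ne_zero_of_trace_ad_ne_zero [CharZero K] [Module.Finite K L] (hZ : Z ≠ 0)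
    (hspan : Submodule.span K {Y} ⊔ H.toSubmodule = ⊤) (hZcent : ∀ a ∈ H, ⁅Z, a⁆ = 0)
    (hder : ∀ a ∈ H, ∀ b ∈ H, ∃ c : K, ⁅a, b⁆ = c • Z)
    (hcent : ∀ a ∈ H, (∀ b ∈ H, ⁅a, b⁆ = 0) → ∃ c : K, a = c • Z) {T : L}
    (hT : LinearMap.trace K L (ad K L T) ≠ 0) : ⁅Y, Z⁆ ≠ 0 := by
  intro hYZ
  obtain ⟨a, h, hh, rfl⟩ := exists_eq_smul_add_of_span_sup_eq_top hspan T
  rw [map_add, map_smul, map_add, map_smul,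
    trace_ad_eq_zero_of_lie_eq_zero hZ hspan hder hcent hYZ,
    (LinearMap.isNilpotent_trace_of_isNilpotent (isNilpotent_ad_of_mem hZcent hder hh)).eq_zero,
    smul_zero, add_zero] at hT
  exact hT rfl

theorem exists_lie_eq_of_mem_of_ne_zero {lam : K} (hYZ : ⁅Y, Z⁆ = lam • Z) (hlam : lam ≠ 0)
    (hder : ∀ a ∈ H, ∀ b ∈ H, ∃ c : K, ⁅a, b⁆ = c • Z)
    (hcent : ∀ a ∈ H, (∀ b ∈ H, ⁅a, b⁆ = 0) → ∃ c : K, a = c • Z) {h : L} (hh : h ∈ H)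
    (hne : h ≠ 0) : ∃ W, ⁅h, W⁆ = Z := by
  by_cases hcentral : ∀ b ∈ H, ⁅h, b⁆ = 0
  · obtain ⟨c, rfl⟩ := hcent h hh hcentral
    have hc : c ≠ 0 := by rintro rfl; exact hne (zero_smul K Z)
    refine ⟨-(c * lam)⁻¹ • Y, ?_⟩
    rw [smul_lie, lie_smul, ← lie_skew, hYZ]
    match_scalars
    field_simp
  · push Not at hcentral
    obtain ⟨b, hb, hhb⟩ := hcentral
    obtain ⟨c, hc⟩ := hder h hh b hb
    have hc0 : c ≠ 0 := by rintro rfl; exact hhb (hc.trans (zero_smul K Z))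
    exact ⟨c⁻¹ • b, by rw [lie_smul, hc, smul_smul, inv_mul_cancel₀ hc0, one_smul]⟩

theorem exists_lie_eq_of_ne_zero {lam : K} (hYZ : ⁅Y, Z⁆ = lam • Z) (hlam : lam ≠ 0)
    (hspan : Submodule.span K {Y} ⊔ H.toSubmodule = ⊤) (hZcent : ∀ a ∈ H, ⁅Z, a⁆ = 0)
    (hder : ∀ a ∈ H, ∀ b ∈ H, ∃ c : K, ⁅a, b⁆ = c • Z)
    (hcent : ∀ a ∈ H, (∀ b ∈ H, ⁅a, b⁆ = 0) → ∃ c : K, a = c • Z) {X : L} (hX : X ≠ 0) :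
    ∃ W, ⁅X, W⁆ = Z := by
  obtain ⟨a, h, hh, rfl⟩ := exists_eq_smul_add_of_span_sup_eq_top hspan X
  rcases eq_or_ne a 0 with rfl | ha
  · rw [zero_smul, zero_add] at hX ⊢
    exact exists_lie_eq_of_mem_of_ne_zero hYZ hlam hder hcent hh hX
  · refine ⟨(a * lam)⁻¹ • Z, ?_⟩
    rw [lie_smul, add_lie, smul_lie, hYZ, ← lie_skew, hZcent h hh, neg_zero, add_zero]
    match_scalars
    field_simp

end Heisenberg

theorem nonunimodular_heisenberg_ideal_no_geodesic_basis_general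
    {L : Type*} [LieRing L] [LieAlgebra ℝ L] [Module.Finite ℝ L]
    (Y Z : L) (H : LieIdeal ℝ L) (lam : ℝ)
    (hZ : Z ≠ 0)
    (hspan : Submodule.span ℝ {Y} ⊔ H.toSubmodule = ⊤)
    (hZcent : ∀ a ∈ H, ⁅Z, a⁆ = (0 : L))
    (hder : ∀ a ∈ H, ∀ b ∈ H, ∃ c : ℝ, ⁅a, b⁆ = c • Z)
    (hcent : ∀ a ∈ H, (∀ b ∈ H, ⁅a, b⁆ = (0 : L)) → ∃ c : ℝ, a = c • Z)
    (hYZ : ⁅Y, Z⁆ = lam • Z)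
    (hnonuni : ∃ T : L, LinearMap.trace ℝ L (LieAlgebra.ad ℝ L T) ≠ 0)
    (B : L →ₗ[ℝ] L →ₗ[ℝ] ℝ)
    (hpos : ∀ x : L, x ≠ 0 → 0 < B x x) :
    (∀ X : L, X ≠ 0 → (∀ W : L, B X ⁅X, W⁆ = 0) → B X Z = 0) ∧
    ¬ ∃ b : Module.Basis (Fin (Module.finrank ℝ L)) ℝ L,
        ∀ i, b i ≠ 0 ∧ ∀ W : L, B (b i) ⁅b i, W⁆ = 0 := by
  obtain ⟨T, hT⟩ := hnonuni
  have hlam : lam ≠ 0 := by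
    rintro rfl
    exact lie_ne_zero_of_trace_ad_ne_zero hZ hspan hZcent hder hcent hT (by rw [hYZ, zero_smul])
  have horth : ∀ X : L, X ≠ 0 → (∀ W : L, B X ⁅X, W⁆ = 0) → B X Z = 0 := by
    intro X hX hgeo
    obtain ⟨W, hW⟩ := exists_lie_eq_of_ne_zero hYZ hlam hspan hZcent hder hcent hX
    exact hW ▸ hgeo W
  refine ⟨horth, fun ⟨b, hb⟩ => (hpos Z hZ).ne' ?_⟩
  have hBZ : B.flip Z = 0 := b.ext fun i => horth (b i) (hb i).1 (hb i).2
  exact congr($hBZ Z)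

/-- Let `g` be a nonunimodular finite-dimensional real Lie algebra having a
codimension-one ideal `H` isomorphic to the Heisenberg algebra `H_{2m+1}`
(encoded structurally: `Z` spans the center of `H`, which coincides with the
derived algebra of `H`, `Y` complements `H`, and `⁅Y, Z⁆ = λ • Z`).  Then, for
every inner product `B` on `g`, every geodesic element is orthogonal to `Z`;
in particular `g` has no basis of geodesic elements. -/
theorem nonunimodular_heisenberg_ideal_no_geodesic_basis
    {L : Type*} [LieRing L] [LieAlgebra ℝ L] [Module.Finite ℝ L]
    (Y Z : L) (H : LieIdeal ℝ L) (lam : ℝ)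
    (hZH : Z ∈ H) (hZ : Z ≠ 0)
    (hYH : Y ∉ H)
    (hspan : Submodule.span ℝ {Y} ⊔ H.toSubmodule = ⊤)
    (hZcent : ∀ a ∈ H, ⁅Z, a⁆ = (0 : L))
    (hder : ∀ a ∈ H, ∀ b ∈ H, ∃ c : ℝ, ⁅a, b⁆ = c • Z)
    (hcent : ∀ a ∈ H, (∀ b ∈ H, ⁅a, b⁆ = (0 : L)) → ∃ c : ℝ, a = c • Z)
    (hYZ : ⁅Y, Z⁆ = lam • Z)
    (hnonuni : ∃ T : L, LinearMap.trace ℝ L (LieAlgebra.ad ℝ L T) ≠ 0)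
    (B : L →ₗ[ℝ] L →ₗ[ℝ] ℝ)
    (hsymm : ∀ x y : L, B x y = B y x)
    (hpos : ∀ x : L, x ≠ 0 → 0 < B x x) :
    (∀ X : L, X ≠ 0 → (∀ W : L, B X ⁅X, W⁆ = 0) → B X Z = 0) ∧
    ¬ ∃ b : Module.Basis (Fin (Module.finrank ℝ L)) ℝ L,
        ∀ i, b i ≠ 0 ∧ ∀ W : L, B (b i) ⁅b i, W⁆ = 0 :=
  nonunimodular_heisenberg_ideal_no_geodesic_basis_general Y Z H lam hZ hspan hZcent hder hcent hYZ
    hnonuni B hpos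
end

section
/- In the Lie algebra g = ℝ·Y ⊕ H_{2m+1} with [Y,Z] = λZ for λ ≠ 0 (Z spanning the center of the Heisenberg ideal), the central element Z lies in the image of ad(T) for every nonzero T ∈ g. -/
/-!
Write `T = t • Y + h` with `h ∈ H`. If `t ≠ 0`, then `ad T` acts on `Z` as the nonzero scalar
`t * λ`. If `t = 0`, then `h ≠ 0`: either `h` is not central in `H` and `⁅h, b⁆` is a nonzero
multiple of `Z` for some `b ∈ H`, or `h` is a nonzero multiple of `Z` and `⁅h, Y⁆` is a nonzero
multiple of `Z`. In every case a nonzero multiple of `Z` lies in the range of `ad T`, hence so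
does `Z`.
-/

section

variable {K L : Type*} [Field K] [LieRing L] [LieAlgebra K L]

theorem exists_lie_eq_of_lie_eq_smul {T W Z : L} {c : K} (hc : c ≠ 0) (h : ⁅T, W⁆ = c • Z) :
    ∃ W' : L, ⁅T, W'⁆ = Z :=
  ⟨c⁻¹ • W, by rw [lie_smul, h, inv_smul_smul₀ hc]⟩

theorem smul_add_lie_eq_smul {Y Z h : L} {lam : K} (hYZ : ⁅Y, Z⁆ = lam • Z) (hhZ : ⁅h, Z⁆ = 0)
    (t : K) : ⁅t • Y + h, Z⁆ = (t * lam) • Z := by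
  rw [add_lie, smul_lie, hYZ, hhZ, add_zero, smul_smul]

theorem exists_lie_eq_of_mem {Y Z h : L} {H : Set L} {lam : K}
    (hder : ∀ a ∈ H, ∀ b ∈ H, ∃ c : K, ⁅a, b⁆ = c • Z)
    (hcent : ∀ a ∈ H, (∀ b ∈ H, ⁅a, b⁆ = (0 : L)) → ∃ c : K, a = c • Z)
    (hYZ : ⁅Y, Z⁆ = lam • Z) (hlam : lam ≠ 0) (hh : h ∈ H) (h0 : h ≠ 0) :
    ∃ W : L, ⁅h, W⁆ = Z := by
  by_cases hcomm : ∀ b ∈ H, ⁅h, b⁆ = (0 : L)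
  · obtain ⟨c, rfl⟩ := hcent h hh hcomm
    have hc : c ≠ 0 := by rintro rfl; exact h0 (zero_smul K Z)
    refine exists_lie_eq_of_lie_eq_smul (W := Y) (neg_ne_zero.mpr (mul_ne_zero hc hlam)) ?_
    rw [smul_lie, ← lie_skew, hYZ, smul_neg, smul_smul, neg_smul]
  · obtain ⟨b, hb, hbne⟩ := not_forall₂.mp hcomm
    obtain ⟨c, hc⟩ := hder h hh b hb
    exact exists_lie_eq_of_lie_eq_smul (by rintro rfl; exact hbne (hc.trans (zero_smul K Z))) hc

end

theorem central_elt_mem_range_ad_general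
    {L : Type*} [LieRing L] [LieAlgebra ℝ L]
    (Y Z : L) (H : LieIdeal ℝ L) (lam : ℝ)
    (hspan : Submodule.span ℝ {Y} ⊔ H.toSubmodule = ⊤)
    (hZcent : ∀ a ∈ H, ⁅Z, a⁆ = (0 : L))
    (hder : ∀ a ∈ H, ∀ b ∈ H, ∃ c : ℝ, ⁅a, b⁆ = c • Z)
    (hcent : ∀ a ∈ H, (∀ b ∈ H, ⁅a, b⁆ = (0 : L)) → ∃ c : ℝ, a = c • Z)
    (hYZ : ⁅Y, Z⁆ = lam • Z) (hlam : lam ≠ 0) :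
    ∀ T : L, T ≠ 0 → ∃ W : L, ⁅T, W⁆ = Z := by
  intro T hT
  obtain ⟨y, hy, h, hh, rfl⟩ := Submodule.mem_sup.mp (hspan ▸ Submodule.mem_top : T ∈ _)
  obtain ⟨t, rfl⟩ := Submodule.mem_span_singleton.mp hy
  rcases eq_or_ne t 0 with rfl | ht
  · rw [zero_smul, zero_add] at hT ⊢
    exact exists_lie_eq_of_mem hder hcent hYZ hlam hh hT
  · have hhZ : ⁅h, Z⁆ = 0 := by rw [← lie_skew, hZcent h hh, neg_zero]
    exact exists_lie_eq_of_lie_eq_smul (mul_ne_zero ht hlam) (smul_add_lie_eq_smul hYZ hhZ t)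

/-- In the Lie algebra `g = ℝ·Y ⊕ H_{2m+1}` with `⁅Y, Z⁆ = λ • Z`, `λ ≠ 0`, where
`Z` spans the center of the Heisenberg ideal `H` (which coincides with the
derived algebra of `H`), the central element `Z` lies in the image of `ad T`
for every nonzero `T ∈ g`. -/
theorem central_elt_mem_range_ad
    {L : Type*} [LieRing L] [LieAlgebra ℝ L] [Module.Finite ℝ L]
    (Y Z : L) (H : LieIdeal ℝ L) (lam : ℝ)
    (hZH : Z ∈ H) (hZ : Z ≠ 0)
    (hYH : Y ∉ H)
    (hspan : Submodule.span ℝ {Y} ⊔ H.toSubmodule = ⊤)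
    (hZcent : ∀ a ∈ H, ⁅Z, a⁆ = (0 : L))
    (hder : ∀ a ∈ H, ∀ b ∈ H, ∃ c : ℝ, ⁅a, b⁆ = c • Z)
    (hcent : ∀ a ∈ H, (∀ b ∈ H, ⁅a, b⁆ = (0 : L)) → ∃ c : ℝ, a = c • Z)
    (hYZ : ⁅Y, Z⁆ = lam • Z) (hlam : lam ≠ 0) :
    ∀ T : L, T ≠ 0 → ∃ W : L, ⁅T, W⁆ = Z :=
  central_elt_mem_range_ad_general Y Z H lam hspan hZcent hder hcent hYZ hlam
end

section
/- Let g be the 4-dimensional Lie algebra M^9_{−1} with basis X₁,…,X₄ and nonzero brackets [X₁,X₂] = X₂ − X₃, [X₁,X₃] = X₂, [X₄,X₂] = X₂, [X₄,X₃] = X₃. For every inner product on g, every geodesic element is orthogonal to Span(X₂,X₃); hence g has no inner product with a geodesic basis. -/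
/-!
Write `U = a X₁ + x X₂ + y X₃ + d X₄`. On `Span(X₂, X₃)` the brackets of `U` with `X₁, X₄` have
determinant `x² + xy + y²`, and those with `X₂, X₃` have determinant `a² + ad + d²`. Neither
quadratic form has a nontrivial real zero, so for `U ≠ 0` the image of `ad U` contains
`Span(X₂, X₃)`, on which the functional `⟨U, ·⟩` of a geodesic `U` must vanish. A geodesic basis
would then be orthogonal to `X₂`, forcing `⟨X₂, X₂⟩ = 0`.
-/

theorem sq_add_mul_add_sq_pos {R : Type*} [CommRing R] [LinearOrder R] [IsStrictOrderedRing R]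
    {x y : R} (h : x ≠ 0 ∨ y ≠ 0) : 0 < x ^ 2 + x * y + y ^ 2 := by
  have hsum : 2 * (x ^ 2 + x * y + y ^ 2) = x ^ 2 + (x + y) ^ 2 + y ^ 2 := by ring
  rcases h with hx | hy
  · nlinarith [sq_pos_of_ne_zero hx, sq_nonneg (x + y), sq_nonneg y]
  · nlinarith [sq_pos_of_ne_zero hy, sq_nonneg (x + y), sq_nonneg x]

theorem eq_zero_of_mul_add_mul_eq_zero {R : Type*} [CommRing R] [NoZeroDivisors R]
    {a b c d p q : R} (hdet : a * d - b * c ≠ 0) (h₁ : a * p + b * q = 0)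
    (h₂ : c * p + d * q = 0) : p = 0 ∧ q = 0 := by
  have hp : (a * d - b * c) * p = 0 := by linear_combination d * h₁ - b * h₂
  have hq : (a * d - b * c) * q = 0 := by linear_combination a * h₂ - c * h₁
  exact ⟨(mul_eq_zero.mp hp).resolve_left hdet, (mul_eq_zero.mp hq).resolve_left hdet⟩

theorem Module.Basis.not_forall_apply_eq_zero {ι R M : Type*} [CommSemiring R] [PartialOrder R]
    [AddCommMonoid M] [Module R M] (c : Module.Basis ι R M) (B : M →ₗ[R] M →ₗ[R] R)
    (hpos : ∀ x : M, x ≠ 0 → 0 < B x x)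
    {v : M} (hv : v ≠ 0) : ¬ ∀ i, B (c i) v = 0 := by
  intro h
  have hflip : B.flip v = 0 := c.ext h
  exact (hpos v hv).ne' (LinearMap.congr_fun hflip v)

/-- `b 0, b 1, b 2, b 3` play the roles of `X₁, X₂, X₃, X₄`. -/
structure IsM9Basis {L : Type*} [LieRing L] [LieAlgebra ℝ L] (b : Module.Basis (Fin 4) ℝ L) :
    Prop where
  lie_zero_one : ⁅b 0, b 1⁆ = b 1 - b 2
  lie_zero_two : ⁅b 0, b 2⁆ = b 1
  lie_three_one : ⁅b 3, b 1⁆ = b 1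
  lie_three_two : ⁅b 3, b 2⁆ = b 2
  lie_zero_three : ⁅b 0, b 3⁆ = 0
  lie_one_two : ⁅b 1, b 2⁆ = 0

namespace IsM9Basis

variable {L : Type*} [LieRing L] [LieAlgebra ℝ L] {b : Module.Basis (Fin 4) ℝ L}

theorem lie_basis_zero (hb : IsM9Basis b) (a x y d : ℝ) :
    ⁅a • b 0 + x • b 1 + y • b 2 + d • b 3, b 0⁆ = (-(x + y)) • b 1 + x • b 2 := by
  simp only [add_lie, smul_lie, lie_self, ← lie_skew (b 1) (b 0), ← lie_skew (b 2) (b 0),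
    ← lie_skew (b 3) (b 0), hb.lie_zero_one, hb.lie_zero_two, hb.lie_zero_three]
  module

theorem lie_basis_one (hb : IsM9Basis b) (a x y d : ℝ) :
    ⁅a • b 0 + x • b 1 + y • b 2 + d • b 3, b 1⁆ = (a + d) • b 1 + (-a) • b 2 := by
  simp only [add_lie, smul_lie, lie_self, hb.lie_zero_one, ← lie_skew (b 2) (b 1), hb.lie_one_two,
    hb.lie_three_one]
  module

theorem lie_basis_two (hb : IsM9Basis b) (a x y d : ℝ) :
    ⁅a • b 0 + x • b 1 + y • b 2 + d • b 3, b 2⁆ = a • b 1 + d • b 2 := by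
  simp only [add_lie, smul_lie, lie_self, hb.lie_zero_two, hb.lie_one_two, hb.lie_three_two]
  module

theorem lie_basis_three (hb : IsM9Basis b) (a x y d : ℝ) :
    ⁅a • b 0 + x • b 1 + y • b 2 + d • b 3, b 3⁆ = (-x) • b 1 + (-y) • b 2 := by
  simp only [add_lie, smul_lie, lie_self, hb.lie_zero_three, ← lie_skew (b 1) (b 3),
    ← lie_skew (b 2) (b 3), hb.lie_three_one, hb.lie_three_two]
  module

theorem apply_eq_zero_of_forall_apply_lie_eq_zero (hb : IsM9Basis b) {U : L} (hU : U ≠ 0)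
    (f : L →ₗ[ℝ] ℝ) (hf : ∀ W, f ⁅U, W⁆ = 0) : f (b 1) = 0 ∧ f (b 2) = 0 := by
  obtain ⟨a, x, y, d, rfl⟩ : ∃ a x y d : ℝ, U = a • b 0 + x • b 1 + y • b 2 + d • b 3 :=
    ⟨_, _, _, _, by rw [← Fin.sum_univ_four (fun i ↦ b.repr U i • b i), b.sum_repr]⟩
  have e₀ := hb.lie_basis_zero a x y d ▸ hf (b 0)
  have e₁ := hb.lie_basis_one a x y d ▸ hf (b 1)
  have e₂ := hb.lie_basis_two a x y d ▸ hf (b 2)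
  have e₃ := hb.lie_basis_three a x y d ▸ hf (b 3)
  simp only [map_add, map_smul, smul_eq_mul] at e₀ e₁ e₂ e₃
  have hcoord : (x ≠ 0 ∨ y ≠ 0) ∨ (a ≠ 0 ∨ d ≠ 0) := by
    by_contra! h
    obtain ⟨⟨rfl, rfl⟩, rfl, rfl⟩ := h
    simp at hU
  rcases hcoord with hxy | had
  · exact eq_zero_of_mul_add_mul_eq_zero
      ((sq_add_mul_add_sq_pos hxy).trans_eq (by ring)).ne' e₀ e₃
  · exact eq_zero_of_mul_add_mul_eq_zero
      ((sq_add_mul_add_sq_pos had).trans_eq (by ring)).ne' e₁ e₂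

end IsM9Basis

theorem M9_no_geodesic_basis_general
    {L : Type*} [LieRing L] [LieAlgebra ℝ L]
    (b : Module.Basis (Fin 4) ℝ L)
    (h12 : ⁅b 0, b 1⁆ = b 1 - b 2) (h13 : ⁅b 0, b 2⁆ = b 1)
    (h42 : ⁅b 3, b 1⁆ = b 1) (h43 : ⁅b 3, b 2⁆ = b 2)
    (h14 : ⁅b 0, b 3⁆ = (0 : L)) (h23 : ⁅b 1, b 2⁆ = (0 : L))
    (B : L →ₗ[ℝ] L →ₗ[ℝ] ℝ)
    (hpos : ∀ x : L, x ≠ 0 → 0 < B x x) :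
    (∀ U : L, U ≠ 0 → (∀ W : L, B U ⁅U, W⁆ = 0) →
        B U (b 1) = 0 ∧ B U (b 2) = 0) ∧
    ¬ ∃ c : Module.Basis (Fin 4) ℝ L,
        ∀ i, c i ≠ 0 ∧ ∀ W : L, B (c i) ⁅c i, W⁆ = 0 := by
  have hb : IsM9Basis b := ⟨h12, h13, h42, h43, h14, h23⟩
  have horth : ∀ U : L, U ≠ 0 → (∀ W : L, B U ⁅U, W⁆ = 0) → B U (b 1) = 0 ∧ B U (b 2) = 0 :=
    fun U hU hgeod => hb.apply_eq_zero_of_forall_apply_lie_eq_zero hU (B U) hgeod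
  refine ⟨horth, ?_⟩
  rintro ⟨c, hc⟩
  exact c.not_forall_apply_eq_zero B hpos (b.ne_zero 1) fun i ↦
    (horth (c i) (hc i).1 (hc i).2).1

/-- For the 4-dimensional Lie algebra `M⁹₋₁` with basis `X₁,…,X₄` and nonzero
brackets `[X₁,X₂] = X₂ − X₃`, `[X₁,X₃] = X₂`, `[X₄,X₂] = X₂`, `[X₄,X₃] = X₃`,
every geodesic element (for any inner product `B`) is orthogonal to
`Span(X₂, X₃)`; hence there is no inner product with a geodesic basis. -/
theorem M9_no_geodesic_basis
    {L : Type*} [LieRing L] [LieAlgebra ℝ L]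
    (b : Module.Basis (Fin 4) ℝ L)
    (h12 : ⁅b 0, b 1⁆ = b 1 - b 2) (h13 : ⁅b 0, b 2⁆ = b 1)
    (h42 : ⁅b 3, b 1⁆ = b 1) (h43 : ⁅b 3, b 2⁆ = b 2)
    (h14 : ⁅b 0, b 3⁆ = (0 : L)) (h23 : ⁅b 1, b 2⁆ = (0 : L))
    (B : L →ₗ[ℝ] L →ₗ[ℝ] ℝ)
    (hsymm : ∀ x y : L, B x y = B y x)
    (hpos : ∀ x : L, x ≠ 0 → 0 < B x x) :
    (∀ U : L, U ≠ 0 → (∀ W : L, B U ⁅U, W⁆ = 0) →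
        B U (b 1) = 0 ∧ B U (b 2) = 0) ∧
    ¬ ∃ c : Module.Basis (Fin 4) ℝ L,
        ∀ i, c i ≠ 0 ∧ ∀ W : L, B (c i) ⁅c i, W⁆ = 0 :=
  M9_no_geodesic_basis_general b h12 h13 h42 h43 h14 h23 B hpos
end

section
/- Let X = (A x; 0 0) be an element of the Lie algebra g of 3×3 real matrices with zero third row and zero trace (A a 2×2 trace-zero matrix, x ∈ ℝ²). If X has matrix rank 1, then X belongs to the image of ad(X); consequently X is not a geodesic element for any inner product on g. -/
/-!
Write the rank-one element as `X = u vᵀ`. The zero third row forces `u ∈ ℝ² × 0`, and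
`vᵀu = tr X = 0`. For `Y = c wᵀ - u aᵀ` with `wᵀu = 0` one computes
`[X, Y] = (aᵀu) X + (vᵀc) u wᵀ`. If `v` does not vanish on `ℝ² × 0`, take `w = v` and
`aᵀu = vᵀc = 1/2` with `c ∈ ℝ² × 0`; otherwise take `c = Ju` (rotation by a right angle)
and `w ⊥ u`, so that `vᵀc = 0`. In both cases `Y ∈ g` and `[X, Y] = X`, whence
`⟨X, [X, Y]⟩ = ⟨X, X⟩ > 0` for every inner product.
-/

open Matrix

namespace Matrix

lemma exists_eq_vecMulVec_of_rank_eq_one {K m n : Type*} [Field K] [Fintype m] [Fintype n]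
    {A : Matrix m n K} (h : A.rank = 1) : ∃ u v, A = vecMulVec u v := by
  classical
  obtain ⟨u, -, hspan⟩ := finrank_eq_one_iff'.mp h
  choose c hc using fun j => hspan ⟨A.col j, Pi.single j 1, mulVec_single_one A j⟩
  refine ⟨u, c, ext fun i j => ?_⟩
  rw [vecMulVec_apply, mul_comm, ← col_apply A j i]
  exact (congrFun (congrArg Subtype.val (hc j)) i).symm

lemma lie_vecMulVec_vecMulVec_sub_vecMulVec {n R : Type*} [Fintype n] [CommRing R]
    {u v a c w : n → R} (hvu : v ⬝ᵥ u = 0) (hwu : w ⬝ᵥ u = 0) :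
    ⁅vecMulVec u v, vecMulVec c w - vecMulVec u a⁆ =
      (a ⬝ᵥ u) • vecMulVec u v + (v ⬝ᵥ c) • vecMulVec u w := by
  simp only [Ring.lie_def, mul_sub, sub_mul, vecMulVec_mul_vecMulVec, hvu, hwu, zero_smul,
    vecMulVec_zero, vecMulVec_smul]
  abel

end Matrix

lemma exists_lie_vecMulVec_eq_self_of_ne_zero_on_plane {u v : Fin 3 → ℝ} (hu : u ≠ 0)
    (hu2 : u 2 = 0) (hvu : v ⬝ᵥ u = 0) (hv : v 0 ≠ 0 ∨ v 1 ≠ 0) :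
    ∃ Y : Matrix (Fin 3) (Fin 3) ℝ,
      (∀ j, Y 2 j = 0) ∧ Y.trace = 0 ∧ ⁅vecMulVec u v, Y⁆ = vecMulVec u v := by
  obtain ⟨k, hk⟩ : ∃ k, u k ≠ 0 := Function.ne_iff.mp hu
  obtain ⟨i, hi2, hi⟩ : ∃ i : Fin 3, i ≠ 2 ∧ v i ≠ 0 := by
    rcases hv with h | h
    exacts [⟨0, by decide, h⟩, ⟨1, by decide, h⟩]
  set a : Fin 3 → ℝ := Pi.single k (2 * u k)⁻¹
  set c : Fin 3 → ℝ := Pi.single i (2 * v i)⁻¹ with hc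
  have hau : a ⬝ᵥ u = 2⁻¹ := by
    simp only [a, single_dotProduct]; field_simp
  have hvc : v ⬝ᵥ c = 2⁻¹ := by
    simp only [c, dotProduct_single]; field_simp
  refine ⟨vecMulVec c v - vecMulVec u a, fun j => ?_, ?_, ?_⟩
  · rw [Matrix.sub_apply, vecMulVec_apply, vecMulVec_apply, hu2, hc,
      Pi.single_eq_of_ne hi2.symm, zero_mul, zero_mul, sub_zero]
  · rw [trace_sub, trace_vecMulVec, trace_vecMulVec, dotProduct_comm c, dotProduct_comm u, hau,
      hvc, sub_self]
  · rw [lie_vecMulVec_vecMulVec_sub_vecMulVec hvu hvu, hau, hvc, ← add_smul]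
    norm_num

lemma exists_lie_vecMulVec_eq_self_of_eq_zero_on_plane {u v : Fin 3 → ℝ} (hu : u ≠ 0)
    (hu2 : u 2 = 0) (hv0 : v 0 = 0) (hv1 : v 1 = 0) :
    ∃ Y : Matrix (Fin 3) (Fin 3) ℝ,
      (∀ j, Y 2 j = 0) ∧ Y.trace = 0 ∧ ⁅vecMulVec u v, Y⁆ = vecMulVec u v := by
  have huu : u ⬝ᵥ u ≠ 0 := dotProduct_self_eq_zero.not.mpr hu
  set Ju : Fin 3 → ℝ := ![-u 1, u 0, 0]
  have hJu : Ju ⬝ᵥ u = 0 := by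
    simp only [Ju, dotProduct, Fin.sum_univ_three, cons_val_zero, cons_val_one, cons_val]
    ring
  have hJJ : Ju ⬝ᵥ Ju = u ⬝ᵥ u := by
    simp only [Ju, dotProduct, Fin.sum_univ_three, cons_val_zero, cons_val_one, cons_val, hu2]
    ring
  have hvu : v ⬝ᵥ u = 0 := by simp [dotProduct, Fin.sum_univ_three, hv0, hv1, hu2]
  have hvJ : v ⬝ᵥ Ju = 0 := by simp [Ju, dotProduct, Fin.sum_univ_three, hv0, hv1]
  refine ⟨vecMulVec Ju ((u ⬝ᵥ u)⁻¹ • Ju) - vecMulVec u ((u ⬝ᵥ u)⁻¹ • u), fun j => ?_, ?_, ?_⟩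
  · rw [Matrix.sub_apply, vecMulVec_apply, vecMulVec_apply, hu2]
    simp [Ju]
  · rw [trace_sub, trace_vecMulVec, trace_vecMulVec, dotProduct_smul, dotProduct_smul, hJJ,
      sub_self]
  · rw [lie_vecMulVec_vecMulVec_sub_vecMulVec hvu (by rw [smul_dotProduct, hJu, smul_zero]),
      smul_dotProduct, smul_eq_mul, inv_mul_cancel₀ huu, hvJ, one_smul, zero_smul, add_zero]

lemma exists_lie_eq_self_of_rank_eq_one {X : Matrix (Fin 3) (Fin 3) ℝ}
    (hrow : ∀ j, X 2 j = 0) (htr : X.trace = 0) (hrk : X.rank = 1) :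
    ∃ Y : Matrix (Fin 3) (Fin 3) ℝ, (∀ j, Y 2 j = 0) ∧ Y.trace = 0 ∧ ⁅X, Y⁆ = X := by
  obtain ⟨u, v, rfl⟩ := exists_eq_vecMulVec_of_rank_eq_one hrk
  have hX : vecMulVec u v ≠ 0 := by
    rintro h
    simp [h] at hrk
  obtain ⟨hu, hv⟩ := not_or.mp (vecMulVec_eq_zero.not.mp hX)
  have hu2 : u 2 = 0 := by
    obtain ⟨j, hj⟩ : ∃ j, v j ≠ 0 := Function.ne_iff.mp hv
    exact (mul_eq_zero.mp (hrow j)).resolve_right hj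
  have hvu : v ⬝ᵥ u = 0 := by rwa [trace_vecMulVec, dotProduct_comm] at htr
  by_cases hv01 : v 0 = 0 ∧ v 1 = 0
  · exact exists_lie_vecMulVec_eq_self_of_eq_zero_on_plane hu hu2 hv01.1 hv01.2
  · exact exists_lie_vecMulVec_eq_self_of_ne_zero_on_plane hu hu2 hvu (not_and_or.mp hv01)

/-- In the Lie algebra of 3×3 real matrices with zero third row and zero trace
(with the commutator bracket), any element `X` of matrix rank 1 lies in the
image of `ad X`; consequently `X` is not a geodesic element for any inner
product on this Lie algebra. -/
theorem rank_one_not_geodesic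
    (X : Matrix (Fin 3) (Fin 3) ℝ)
    (hrow : ∀ j, X 2 j = 0) (htr : Matrix.trace X = 0)
    (hrk : X.rank = 1) :
    (∃ Y : Matrix (Fin 3) (Fin 3) ℝ,
        (∀ j, Y 2 j = 0) ∧ Matrix.trace Y = 0 ∧ ⁅X, Y⁆ = X) ∧
    ∀ B : Matrix (Fin 3) (Fin 3) ℝ →ₗ[ℝ] Matrix (Fin 3) (Fin 3) ℝ →ₗ[ℝ] ℝ,
      (∀ M N, B M N = B N M) →
      (∀ M : Matrix (Fin 3) (Fin 3) ℝ,
          (∀ j, M 2 j = 0) → Matrix.trace M = 0 → M ≠ 0 → 0 < B M M) →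
      ¬ (∀ Y : Matrix (Fin 3) (Fin 3) ℝ,
          (∀ j, Y 2 j = 0) → Matrix.trace Y = 0 → B X ⁅X, Y⁆ = 0) := by
  have hX : X ≠ 0 := by
    rintro rfl
    simp at hrk
  obtain ⟨Y, hY2, hYtr, hXY⟩ := exists_lie_eq_self_of_rank_eq_one hrow htr hrk
  refine ⟨⟨Y, hY2, hYtr, hXY⟩, fun B _ hpos hgeod => ?_⟩
  have hBXX := hgeod Y hY2 hYtr
  rw [hXY] at hBXX
  exact (hpos X hrow htr hX).ne' hBXX
end

section
/- Let g be a 5-dimensional solvable Lie algebra with nilradical isomorphic to H₃ (3-dimensional Heisenberg), say g = Span(X₁,X₂) ⊕ n with n = Span(X₃,X₄,X₅), [X₃,X₄]=X₅. If g is unimodular then the central element X₅ of n lies in the center of g. In particular, a unimodular 5-dimensional Lie algebra with nilradical H₃ has nontrivial center. -/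
/-!
Over the ideal `n = span {X₃, X₄, X₅}` the operator `ad X` of any `X` acts as a derivation of the
Heisenberg algebra, so the Leibniz rule applied to `[X₃, X₄] = X₅` shows `[X, X₅] = (a + d) X₅`,
where `a` and `d` are the diagonal coefficients of `ad X` at `X₃` and `X₄`. For `X = X₁, X₂` the
image of `ad X` lies in `n`, so the trace of `ad X` is `a + d + (a + d)`; unimodularity forces
`a + d = 0`, hence `[X₁, X₅] = [X₂, X₅] = 0`, and `X₅` is central.
-/

open LieAlgebra Module Submodule

theorem LinearMap.trace_eq_sum_repr {R M ι : Type*} [CommRing R] [AddCommGroup M] [Module R M]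
    [Fintype ι] (b : Basis ι R M) (f : M →ₗ[R] M) :
    LinearMap.trace R M f = ∑ i, b.repr (f (b i)) i := by
  classical
  simp [LinearMap.trace_eq_matrix_trace R b, Matrix.trace, LinearMap.toMatrix_apply]

theorem lie_mem_of_forall_lie_basis_mem {R L ι : Type*} [CommRing R] [LieRing L]
    [LieAlgebra R L] (b : Basis ι R L) {X : L} {N : Submodule R L} (h : ∀ i, ⁅X, b i⁆ ∈ N)
    (Y : L) : ⁅X, Y⁆ ∈ N := by
  have hspan : span R (Set.range b) ≤ N.comap (ad R L X) :=
    span_le.2 <| Set.range_subset_iff.2 h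
  rw [b.span_eq] at hspan
  exact hspan mem_top

theorem lie_eq_smul_of_heisenberg {R L : Type*} [CommRing R] [LieRing L] [LieAlgebra R L]
    {x y z X : L} (hxy : ⁅x, y⁆ = z) (hxz : ⁅x, z⁆ = 0) (hyz : ⁅y, z⁆ = 0) {a₁ a₂ a₃ b₁ b₂ b₃ : R}
    (hx : ⁅X, x⁆ = a₁ • x + a₂ • y + a₃ • z) (hy : ⁅X, y⁆ = b₁ • x + b₂ • y + b₃ • z) :
    ⁅X, z⁆ = (a₁ + b₂) • z := by
  have hzy : ⁅z, y⁆ = 0 := by rw [← lie_skew, hyz, neg_zero]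
  rw [← hxy, leibniz_lie, hx, hy]
  simp only [add_lie, smul_lie, lie_add, lie_smul, lie_self, hxy, hxz, hzy, smul_zero, add_zero,
    zero_add, add_smul]

theorem lie_eq_zero_of_trace_ad_eq_zero {K L : Type*} [Field K] [NeZero (2 : K)] [LieRing L]
    [LieAlgebra K L] (b : Basis (Fin 5) K L) (h23 : ⁅b 2, b 3⁆ = b 4) (h24 : ⁅b 2, b 4⁆ = 0)
    (h34 : ⁅b 3, b 4⁆ = 0) {X : L} (hX : ∀ Y, ⁅X, Y⁆ ∈ span K {b 2, b 3, b 4})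
    (htr : LinearMap.trace K L (ad K L X) = 0) : ⁅X, b 4⁆ = 0 := by
  obtain ⟨c₀, d₀, e₀, h₀⟩ := mem_span_triple.1 (hX (b 0))
  obtain ⟨c₁, d₁, e₁, h₁⟩ := mem_span_triple.1 (hX (b 1))
  obtain ⟨c₂, d₂, e₂, h₂⟩ := mem_span_triple.1 (hX (b 2))
  obtain ⟨c₃, d₃, e₃, h₃⟩ := mem_span_triple.1 (hX (b 3))
  have h₄ := lie_eq_smul_of_heisenberg h23 h24 h34 h₂.symm h₃.symm
  rw [LinearMap.trace_eq_sum_repr b, Fin.sum_univ_five] at htr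
  simp only [ad_apply, ← h₀, ← h₁, ← h₂, ← h₃, h₄, map_add, map_smul, Basis.repr_self,
    Finsupp.add_apply, Finsupp.smul_apply, Finsupp.single_apply, Fin.reduceEq, if_true, if_false,
    smul_eq_mul, mul_one, mul_zero, add_zero, zero_add] at htr
  rw [← two_mul, mul_eq_zero] at htr
  rw [h₄, htr.resolve_left two_ne_zero, zero_smul]

theorem unimodular_heisenberg_nilradical_center_general
    {L : Type*} [LieRing L] [LieAlgebra ℝ L]
    (b : Module.Basis (Fin 5) ℝ L)
    (h34 : ⁅b 2, b 3⁆ = b 4) (h35 : ⁅b 2, b 4⁆ = (0 : L))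
    (h45 : ⁅b 3, b 4⁆ = (0 : L))
    (hn0 : ∀ X ∈ Submodule.span ℝ {b 2, b 3, b 4},
        ⁅b 0, X⁆ ∈ Submodule.span ℝ {b 2, b 3, b 4})
    (hn1 : ∀ X ∈ Submodule.span ℝ {b 2, b 3, b 4},
        ⁅b 1, X⁆ ∈ Submodule.span ℝ {b 2, b 3, b 4})
    (h12 : ⁅b 0, b 1⁆ ∈ Submodule.span ℝ {b 2, b 3, b 4})
    (huni : ∀ X : L, LinearMap.trace ℝ L (LieAlgebra.ad ℝ L X) = 0) :
    (∀ W : L, ⁅W, b 4⁆ = 0) ∧ LieAlgebra.center ℝ L ≠ ⊥ := by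
  have h04 : ⁅b 0, b 4⁆ = 0 := by
    refine lie_eq_zero_of_trace_ad_eq_zero b h34 h35 h45 (lie_mem_of_forall_lie_basis_mem b ?_)
      (huni _)
    intro i
    fin_cases i
    · simp
    · exact h12
    all_goals exact hn0 _ (subset_span (by simp))
  have h14 : ⁅b 1, b 4⁆ = 0 := by
    refine lie_eq_zero_of_trace_ad_eq_zero b h34 h35 h45 (lie_mem_of_forall_lie_basis_mem b ?_)
      (huni _)
    intro i
    fin_cases i
    · exact lie_skew (b 1) (b 0) ▸ neg_mem h12
    · simp
    all_goals exact hn1 _ (subset_span (by simp))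
  have hcentral : ∀ W : L, ⁅W, b 4⁆ = 0 := by
    intro W
    rw [← lie_skew, neg_eq_zero, ← mem_bot ℝ]
    refine lie_mem_of_forall_lie_basis_mem b (fun i => ?_) W
    rw [mem_bot, ← lie_skew, neg_eq_zero]
    fin_cases i
    exacts [h04, h14, h35, h45, lie_self _]
  refine ⟨hcentral, fun hbot => b.ne_zero 4 ?_⟩
  rw [← LieSubmodule.mem_bot (R := ℝ) (L := L), ← hbot]
  exact (LieModule.mem_maxTrivSubmodule ℝ L L (b 4)).2 hcentral

/-- Let `g` be a 5-dimensional solvable real Lie algebra with nilradical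
isomorphic to the 3-dimensional Heisenberg algebra: basis `X₁,…,X₅` with
`n = Span(X₃,X₄,X₅)`, `[X₃,X₄] = X₅`, `n` an ideal and `[X₁,X₂] ∈ n`.  If `g`
is unimodular, then the central element `X₅` of `n` lies in the center of `g`;
in particular `g` has nontrivial center. -/
theorem unimodular_heisenberg_nilradical_center
    {L : Type*} [LieRing L] [LieAlgebra ℝ L] [LieAlgebra.IsSolvable L]
    (b : Module.Basis (Fin 5) ℝ L)
    (h34 : ⁅b 2, b 3⁆ = b 4) (h35 : ⁅b 2, b 4⁆ = (0 : L))
    (h45 : ⁅b 3, b 4⁆ = (0 : L))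
    (hn0 : ∀ X ∈ Submodule.span ℝ {b 2, b 3, b 4},
        ⁅b 0, X⁆ ∈ Submodule.span ℝ {b 2, b 3, b 4})
    (hn1 : ∀ X ∈ Submodule.span ℝ {b 2, b 3, b 4},
        ⁅b 1, X⁆ ∈ Submodule.span ℝ {b 2, b 3, b 4})
    (h12 : ⁅b 0, b 1⁆ ∈ Submodule.span ℝ {b 2, b 3, b 4})
    (huni : ∀ X : L, LinearMap.trace ℝ L (LieAlgebra.ad ℝ L X) = 0) :
    (∀ W : L, ⁅W, b 4⁆ = 0) ∧ LieAlgebra.center ℝ L ≠ ⊥ :=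
  unimodular_heisenberg_nilradical_center_general b h34 h35 h45 hn0 hn1 h12 huni
end

section
/- Let φ be a derivation of the 4-dimensional filiform nilpotent Lie algebra m₀(4) (basis X₁,…,X₄, brackets [X₁,X₂]=X₃, [X₁,X₃]=X₄) with trace zero, such that the eigenvalue of φ on X₄ is nonzero. Then, after rescaling, φ is semisimple with eigenvalues 3, −4, −1, 2 (on suitable eigenvectors replacing X₁, X₂, X₃, X₄ respectively). -/
/-!
Expanding the Leibniz rule on `[X₁,X₂] = X₃`, `[X₁,X₃] = X₄` and `[X₂,X₃] = 0` shows that the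
matrix of `φ` in the basis `X₁,…,X₄` is lower triangular with diagonal `(a, d, a+d, 2a+d)`.
Trace zero forces `3d = -4a`, so the eigenvalue `2a+d = 2a/3` on `X₄` is nonzero exactly when
`a ≠ 0`, and then `(3/a) • φ` has diagonal `(3, -4, -1, 2)`. The diagonal entries of a triangular
operator are eigenvalues, and eigenvectors for distinct eigenvalues form a basis.
-/

open Module

open Polynomial in
theorem Matrix.charpoly_of_isLowerTriangular {n R : Type*} [Fintype n] [DecidableEq n]
    [LinearOrder n] [CommRing R] (M : Matrix n n R) (h : M.IsLowerTriangular) :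
    M.charpoly = ∏ i, (X - C (M i i)) := by
  rw [← charpoly_transpose]
  exact charpoly_of_isUpperTriangular _ h.transpose

section Eigenbasis

variable {K V ι : Type*} [Field K] [AddCommGroup V] [Module K V] [Fintype ι]

theorem Module.End.hasEigenvalue_toMatrix_diag [DecidableEq ι] [LinearOrder ι]
    [FiniteDimensional K V] (f : End K V) (b : Basis ι K V)
    (hf : (LinearMap.toMatrix b b f).IsLowerTriangular) (i : ι) :
    f.HasEigenvalue (LinearMap.toMatrix b b f i i) := by
  rw [hasEigenvalue_iff_isRoot_charpoly, ← LinearMap.charpoly_toMatrix f b,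
    Matrix.charpoly_of_isLowerTriangular _ hf, Polynomial.IsRoot, Polynomial.eval_prod]
  exact Finset.prod_eq_zero (Finset.mem_univ i) (by simp)

theorem Module.End.exists_basis_apply_eq_smul_of_injective [FiniteDimensional K V] (f : End K V)
    (μ : ι → K) (hμ : Function.Injective μ) (hf : ∀ i, f.HasEigenvalue (μ i))
    (hcard : Fintype.card ι = finrank K V) :
    ∃ B : Basis ι K V, ∀ i, f (B i) = μ i • B i := by
  choose v hv using fun i => (hf i).exists_hasEigenvector
  refine ⟨basisOfLinearIndependentOfCardEqFinrank' v
    (f.eigenvectors_linearIndependent' μ hμ v hv) hcard, fun i => ?_⟩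
  simpa using (hv i).apply_eq_smul

theorem Module.End.exists_basis_apply_eq_smul_of_isLowerTriangular [DecidableEq ι]
    [LinearOrder ι] (f : End K V) (b : Basis ι K V)
    (hf : (LinearMap.toMatrix b b f).IsLowerTriangular)
    (hdiag : Function.Injective (LinearMap.toMatrix b b f).diag) :
    ∃ B : Basis ι K V, ∀ i, f (B i) = LinearMap.toMatrix b b f i i • B i :=
  have := b.finiteDimensional_of_finite
  f.exists_basis_apply_eq_smul_of_injective _ hdiag (f.hasEigenvalue_toMatrix_diag b hf)
    (finrank_eq_card_basis b).symm

end Eigenbasis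

theorem LieDerivation.apply_basis_eq_sum_toMatrix {R L ι : Type*} [CommRing R] [LieRing L]
    [LieAlgebra R L] [Fintype ι] [DecidableEq ι] (φ : LieDerivation R L L) (b : Basis ι R L)
    (j : ι) : φ (b j) = ∑ i, LinearMap.toMatrix b b φ i j • b i := by
  rw [← Matrix.toLin_self b b, Matrix.toLin_toMatrix]
  rfl

section Filiform

variable {K L : Type*} [Field K] [LieRing L] [LieAlgebra K L]

/-- `b i` plays the role of `X_{i+1}` in `m₀(4)`. -/
structure IsFiliformBasis (b : Basis (Fin 4) K L) : Prop where
  lie_zero_one : ⁅b 0, b 1⁆ = b 2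
  lie_zero_two : ⁅b 0, b 2⁆ = b 3
  lie_zero_three : ⁅b 0, b 3⁆ = 0
  lie_one_two : ⁅b 1, b 2⁆ = 0
  lie_one_three : ⁅b 1, b 3⁆ = 0
  lie_two_three : ⁅b 2, b 3⁆ = 0

namespace IsFiliformBasis

variable {b : Basis (Fin 4) K L} (φ : LieDerivation K L L)

local notation "M" => LinearMap.toMatrix b b φ.toLinearMap

theorem apply_two (hb : IsFiliformBasis b) :
    φ (b 2) = (M 0 0 + M 1 1) • b 2 + M 2 1 • b 3 := by
  rw [← hb.lie_zero_one, φ.apply_lie_eq_add, φ.apply_basis_eq_sum_toMatrix b 0,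
    φ.apply_basis_eq_sum_toMatrix b 1]
  simp only [Fin.sum_univ_four, lie_add, add_lie, lie_smul, smul_lie, lie_self, hb.lie_zero_one,
    hb.lie_zero_two, hb.lie_zero_three, ← lie_skew (b 2) (b 1), ← lie_skew (b 3) (b 1),
    hb.lie_one_two, hb.lie_one_three, neg_zero, smul_zero, add_zero, zero_add]
  module

theorem apply_three (hb : IsFiliformBasis b) :
    φ (b 3) = (2 * M 0 0 + M 1 1) • b 3 := by
  rw [← hb.lie_zero_two, φ.apply_lie_eq_add, hb.apply_two φ, φ.apply_basis_eq_sum_toMatrix b 0]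
  simp only [Fin.sum_univ_four, lie_add, add_lie, lie_smul, smul_lie, lie_self, hb.lie_zero_two,
    hb.lie_zero_three, ← lie_skew (b 3) (b 2), hb.lie_one_two, hb.lie_two_three, neg_zero,
    smul_zero, add_zero]
  module

theorem toMatrix_zero_one (hb : IsFiliformBasis b) : M 0 1 = 0 := by
  have h := φ.apply_lie_eq_add (b 1) (b 2)
  rw [hb.lie_one_two, map_zero, hb.apply_two φ, φ.apply_basis_eq_sum_toMatrix b 1] at h
  simp only [Fin.sum_univ_four, lie_add, add_lie, lie_smul, smul_lie, lie_self, hb.lie_zero_two,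
    ← lie_skew (b 3) (b 2), hb.lie_one_two, hb.lie_one_three, hb.lie_two_three, neg_zero,
    smul_zero, add_zero, zero_add] at h
  exact (smul_eq_zero.mp h.symm).resolve_right (b.ne_zero 3)

theorem toMatrix_col_two (hb : IsFiliformBasis b) (i : Fin 4) :
    M i 2 = ![0, 0, M 0 0 + M 1 1, M 2 1] i := by
  rw [LinearMap.toMatrix_apply, LieDerivation.coeFn_coe, hb.apply_two φ]
  fin_cases i <;> simp

theorem toMatrix_col_three (hb : IsFiliformBasis b) (i : Fin 4) :
    M i 3 = ![0, 0, 0, 2 * M 0 0 + M 1 1] i := by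
  rw [LinearMap.toMatrix_apply, LieDerivation.coeFn_coe, hb.apply_three φ]
  fin_cases i <;> simp

theorem toMatrix_isLowerTriangular (hb : IsFiliformBasis b) : Matrix.IsLowerTriangular M := by
  intro i j (hij : i < j)
  fin_cases i <;> fin_cases j <;> simp at hij <;>
    simp [hb.toMatrix_zero_one φ, hb.toMatrix_col_two φ, hb.toMatrix_col_three φ]

end IsFiliformBasis

end Filiform

/-- A trace-zero derivation `φ` of the filiform nilpotent Lie algebra `m₀(4)`
(basis `X₁,…,X₄`, brackets `[X₁,X₂]=X₃`, `[X₁,X₃]=X₄`) whose eigenvalue on the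
central element `X₄` is nonzero is, after rescaling, semisimple with eigenvalues
`3, −4, −1, 2` on suitable eigenvectors replacing `X₁, X₂, X₃, X₄`. -/
theorem filiform_derivation_eigenvalues
    {L : Type*} [LieRing L] [LieAlgebra ℝ L]
    (b : Module.Basis (Fin 4) ℝ L)
    (h12 : ⁅b 0, b 1⁆ = b 2) (h13 : ⁅b 0, b 2⁆ = b 3)
    (h14 : ⁅b 0, b 3⁆ = (0 : L)) (h23 : ⁅b 1, b 2⁆ = (0 : L))
    (h24 : ⁅b 1, b 3⁆ = (0 : L)) (h34 : ⁅b 2, b 3⁆ = (0 : L))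
    (φ : LieDerivation ℝ L L)
    (htr : LinearMap.trace ℝ L φ.toLinearMap = 0)
    (hev : ∃ lam : ℝ, lam ≠ 0 ∧ φ (b 3) = lam • b 3) :
    ∃ c : ℝ, c ≠ 0 ∧ ∃ B : Module.Basis (Fin 4) ℝ L,
      ∀ i : Fin 4, c • φ (B i) = (![(3 : ℝ), -4, -1, 2] i) • B i := by
  obtain ⟨lam, hlam, hφ3⟩ := hev
  have hb : IsFiliformBasis b := ⟨h12, h13, h14, h23, h24, h34⟩
  set M := LinearMap.toMatrix b b φ.toLinearMap
  have hM22 : M 2 2 = M 0 0 + M 1 1 := by simpa using hb.toMatrix_col_two φ 2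
  have hM33 : M 3 3 = 2 * M 0 0 + M 1 1 := by simpa using hb.toMatrix_col_three φ 3
  have htrace : 4 * M 0 0 + 3 * M 1 1 = 0 := by
    rw [LinearMap.trace_eq_matrix_trace ℝ b] at htr
    simp only [Matrix.trace, Matrix.diag, Fin.sum_univ_four] at htr
    linarith
  have hlamM : lam = M 3 3 := by
    simp [M, LinearMap.toMatrix_apply, hφ3]
  have ha : M 0 0 ≠ 0 := fun h => hlam (by linarith)
  set c := 3 / M 0 0
  have hdiag : ∀ i, c * M i i = ![(3 : ℝ), -4, -1, 2] i := by
    intro i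
    fin_cases i <;> simp [c, hM22, hM33] <;> field_simp <;> linarith
  have hinj : Function.Injective ![(3 : ℝ), -4, -1, 2] := by
    intro i j h
    fin_cases i <;> fin_cases j <;> revert h <;> norm_num
  obtain ⟨B, hB⟩ := Module.End.exists_basis_apply_eq_smul_of_isLowerTriangular _ b
    (hb.toMatrix_isLowerTriangular φ) fun i j h => hinj <| by
      rw [← hdiag, ← hdiag]; exact congrArg _ h
  refine ⟨c, by positivity, B, fun i => ?_⟩
  rw [← hdiag, ← smul_smul, ← hB i]
  rfl
end

section
/- Consider the 5-dimensional Lie algebra g₃₅ with basis X₁,…,X₅, where n = Span(X₃,X₄,X₅) is abelian, [X₁,X₂]=0, ad(X₁)|_n = diag(−2,1,1) and ad(X₂)|_n acts by [X₂,X₃]=0, [X₂,X₄]=−X₅, [X₂,X₅]=X₄ (relative to basis X₃,X₄,X₅). Under the inner product making X₁, X₂, Y₃ = X₃+X₄, Y₄ = X₃ − ½X₄ + (√3/2)X₅, Y₅ = X₃ − ½X₄ − (√3/2)X₅ orthonormal, these five vectors form a geodesic basis of g₃₅. -/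
/-!
The geodesic condition `⟨Z, [Z, W]⟩ = 0` is linear in `W`, so for a frame vector it suffices to
take `W` in the frame, i.e. to show that the bracket of two frame vectors is orthogonal to both.
By orthonormality this is read off from coefficients: `[X₁, X₂] = 0`, `n = span(Y₃, Y₄, Y₅)` is
abelian, and on `n` the operators `ad X₁` and `ad X₂` have zero diagonal in the basis `Y₃, Y₄, Y₅`
(`[X₁, Y₃] = −Y₄ − Y₅`, `√3 [X₂, Y₃] = Y₅ − Y₄`, and cyclically). Orthonormality also gives
linear independence, and a dimension count makes the frame span.
-/

open LieAlgebra Submodule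

section Geodesic

variable {R L : Type*} [CommRing R] [LieRing L] [LieAlgebra R L]

def IsGeodesicVector (B : L →ₗ[R] L →ₗ[R] R) (Z : L) : Prop :=
  Z ≠ 0 ∧ ∀ W : L, B Z ⁅Z, W⁆ = 0

theorem isGeodesicVector_of_span_eq_top {B : L →ₗ[R] L →ₗ[R] R} {Z : L} (hZ : Z ≠ 0)
    {s : Set L} (hs : span R s = ⊤) (h : ∀ w ∈ s, B Z ⁅Z, w⁆ = 0) : IsGeodesicVector B Z :=
  ⟨hZ, LinearMap.congr_fun (LinearMap.ext_on hs (f := B Z ∘ₗ ad R L Z) (g := 0) h)⟩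

theorem lie_eq_zero_of_mem_span {s : Set L} (hs : ∀ x ∈ s, ∀ y ∈ s, ⁅x, y⁆ = 0) {x y : L}
    (hx : x ∈ span R s) (hy : y ∈ span R s) : ⁅x, y⁆ = 0 := by
  induction hx, hy using span_induction₂ with
  | mem_mem x y hx hy => exact hs x hx y hy
  | zero_left | zero_right => simp
  | add_left | add_right => simp_all
  | smul_left | smul_right => simp_all

end Geodesic

section G35

variable {L : Type*} [LieRing L] [LieAlgebra ℝ L] {X : Fin 5 → L}

structure G35Brackets (X : Fin 5 → L) : Prop where
  lie_zero_one : ⁅X 0, X 1⁆ = 0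
  lie_eq_zero_of_two_le : ∀ i j : Fin 5, 2 ≤ (i : ℕ) → 2 ≤ (j : ℕ) → ⁅X i, X j⁆ = 0
  lie_zero_two : ⁅X 0, X 2⁆ = (-2 : ℝ) • X 2
  lie_zero_three : ⁅X 0, X 3⁆ = X 3
  lie_zero_four : ⁅X 0, X 4⁆ = X 4
  lie_one_two : ⁅X 1, X 2⁆ = 0
  lie_one_three : ⁅X 1, X 3⁆ = -X 4
  lie_one_four : ⁅X 1, X 4⁆ = X 3

/-- The frame `(X₁, X₂, Y₃, Y₄, Y₅)`: indices in `Fin 5` are one less than in the paper. -/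
noncomputable def g35Frame (X : Fin 5 → L) : Fin 5 → L :=
  ![X 0, X 1, X 2 + X 3, X 2 - (1 / 2 : ℝ) • X 3 + (Real.sqrt 3 / 2) • X 4,
    X 2 - (1 / 2 : ℝ) • X 3 - (Real.sqrt 3 / 2) • X 4]

theorem g35Frame_mem_span (X : Fin 5 → L) {i : Fin 5} (hi : 2 ≤ (i : ℕ)) :
    g35Frame X i ∈ span ℝ {X 2, X 3, X 4} := by
  have h2 : X 2 ∈ span ℝ {X 2, X 3, X 4} := subset_span (by simp)
  have h3 : X 3 ∈ span ℝ {X 2, X 3, X 4} := subset_span (by simp)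
  have h4 : X 4 ∈ span ℝ {X 2, X 3, X 4} := subset_span (by simp)
  fin_cases i <;> simp [g35Frame] at hi ⊢ <;> apply_rules [add_mem, sub_mem, smul_mem]

namespace G35Brackets

theorem lie_g35Frame_eq_zero (hX : G35Brackets X) {i j : Fin 5} (hi : 2 ≤ (i : ℕ))
    (hj : 2 ≤ (j : ℕ)) :
    ⁅g35Frame X i, g35Frame X j⁆ = 0 := by
  refine lie_eq_zero_of_mem_span ?_ (g35Frame_mem_span X hi) (g35Frame_mem_span X hj)
  simp only [Set.mem_insert_iff, Set.mem_singleton_iff]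
  rintro _ (rfl | rfl | rfl) _ (rfl | rfl | rfl) <;>
    exact hX.lie_eq_zero_of_two_le _ _ (by decide) (by decide)

theorem lie_g35Frame_zero_one (hX : G35Brackets X) : ⁅g35Frame X 0, g35Frame X 1⁆ = 0 :=
  hX.lie_zero_one

theorem lie_g35Frame_zero_two (hX : G35Brackets X) :
    ⁅g35Frame X 0, g35Frame X 2⁆ = -g35Frame X 3 - g35Frame X 4 := by
  simp only [g35Frame, Matrix.cons_val, lie_add, hX.lie_zero_two, hX.lie_zero_three]
  module

theorem lie_g35Frame_zero_three (hX : G35Brackets X) :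
    ⁅g35Frame X 0, g35Frame X 3⁆ = -g35Frame X 2 - g35Frame X 4 := by
  simp only [g35Frame, Matrix.cons_val, lie_add, lie_sub, lie_smul, hX.lie_zero_two,
    hX.lie_zero_three, hX.lie_zero_four]
  module

theorem lie_g35Frame_zero_four (hX : G35Brackets X) :
    ⁅g35Frame X 0, g35Frame X 4⁆ = -g35Frame X 2 - g35Frame X 3 := by
  simp only [g35Frame, Matrix.cons_val, lie_sub, lie_smul, hX.lie_zero_two,
    hX.lie_zero_three, hX.lie_zero_four]
  module

theorem lie_g35Frame_one_two (hX : G35Brackets X) :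
    ⁅g35Frame X 1, g35Frame X 2⁆ = (√3)⁻¹ • (g35Frame X 4 - g35Frame X 3) := by
  simp only [g35Frame, Matrix.cons_val, lie_add, hX.lie_one_two, hX.lie_one_three]
  match_scalars <;> field_simp <;> norm_num

theorem lie_g35Frame_one_three (hX : G35Brackets X) :
    ⁅g35Frame X 1, g35Frame X 3⁆ = (√3)⁻¹ • (g35Frame X 2 - g35Frame X 4) := by
  simp only [g35Frame, Matrix.cons_val, lie_add, lie_sub, lie_smul, hX.lie_one_two,
    hX.lie_one_three, hX.lie_one_four]
  match_scalars <;> field_simp <;> norm_num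

theorem lie_g35Frame_one_four (hX : G35Brackets X) :
    ⁅g35Frame X 1, g35Frame X 4⁆ = (√3)⁻¹ • (g35Frame X 3 - g35Frame X 2) := by
  simp only [g35Frame, Matrix.cons_val, lie_sub, lie_smul, hX.lie_one_two,
    hX.lie_one_three, hX.lie_one_four]
  match_scalars <;> field_simp <;> norm_num

variable {B : L →ₗ[ℝ] L →ₗ[ℝ] ℝ}

theorem apply_lie_g35Frame_of_lt (hX : G35Brackets X)
    (hB : ∀ i j, B (g35Frame X i) (g35Frame X j) = if i = j then 1 else 0) {i j : Fin 5}
    (hij : i < j) :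
    B (g35Frame X i) ⁅g35Frame X i, g35Frame X j⁆ = 0 ∧
      B (g35Frame X j) ⁅g35Frame X i, g35Frame X j⁆ = 0 := by
  revert hij
  fin_cases i <;> fin_cases j <;>
    simp [hB, hX.lie_g35Frame_zero_one, hX.lie_g35Frame_zero_two, hX.lie_g35Frame_zero_three,
      hX.lie_g35Frame_zero_four, hX.lie_g35Frame_one_two, hX.lie_g35Frame_one_three,
      hX.lie_g35Frame_one_four, hX.lie_g35Frame_eq_zero]

theorem apply_lie_g35Frame (hX : G35Brackets X)
    (hB : ∀ i j, B (g35Frame X i) (g35Frame X j) = if i = j then 1 else 0) (i j : Fin 5) :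
    B (g35Frame X i) ⁅g35Frame X i, g35Frame X j⁆ = 0 := by
  rcases lt_trichotomy i j with hij | rfl | hji
  · exact (hX.apply_lie_g35Frame_of_lt hB hij).1
  · simp
  · rw [← lie_skew, map_neg, (hX.apply_lie_g35Frame_of_lt hB hji).2, neg_zero]

end G35Brackets
end G35

theorem g35_geodesic_basis_general
    {L : Type*} [LieRing L] [LieAlgebra ℝ L]
    (b : Module.Basis (Fin 5) ℝ L)
    (h12 : ⁅b 0, b 1⁆ = (0 : L))
    (habel : ∀ i j : Fin 5, 2 ≤ (i : ℕ) → 2 ≤ (j : ℕ) → ⁅b i, b j⁆ = (0 : L))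
    (h13 : ⁅b 0, b 2⁆ = (-2 : ℝ) • b 2) (h14 : ⁅b 0, b 3⁆ = b 3)
    (h15 : ⁅b 0, b 4⁆ = b 4)
    (h23 : ⁅b 1, b 2⁆ = (0 : L)) (h24 : ⁅b 1, b 3⁆ = -b 4)
    (h25 : ⁅b 1, b 4⁆ = b 3)
    (B : L →ₗ[ℝ] L →ₗ[ℝ] ℝ)
    (horth : ∀ i j : Fin 5,
      B (![b 0, b 1, b 2 + b 3,
           b 2 - (1 / 2 : ℝ) • b 3 + (Real.sqrt 3 / 2) • b 4,
           b 2 - (1 / 2 : ℝ) • b 3 - (Real.sqrt 3 / 2) • b 4] i)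
        (![b 0, b 1, b 2 + b 3,
           b 2 - (1 / 2 : ℝ) • b 3 + (Real.sqrt 3 / 2) • b 4,
           b 2 - (1 / 2 : ℝ) • b 3 - (Real.sqrt 3 / 2) • b 4] j)
        = if i = j then (1 : ℝ) else 0) :
    LinearIndependent ℝ
      ![b 0, b 1, b 2 + b 3,
        b 2 - (1 / 2 : ℝ) • b 3 + (Real.sqrt 3 / 2) • b 4,
        b 2 - (1 / 2 : ℝ) • b 3 - (Real.sqrt 3 / 2) • b 4] ∧
    Submodule.span ℝ
      (Set.range ![b 0, b 1, b 2 + b 3,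
        b 2 - (1 / 2 : ℝ) • b 3 + (Real.sqrt 3 / 2) • b 4,
        b 2 - (1 / 2 : ℝ) • b 3 - (Real.sqrt 3 / 2) • b 4]) = ⊤ ∧
    ∀ i : Fin 5,
      (![b 0, b 1, b 2 + b 3,
         b 2 - (1 / 2 : ℝ) • b 3 + (Real.sqrt 3 / 2) • b 4,
         b 2 - (1 / 2 : ℝ) • b 3 - (Real.sqrt 3 / 2) • b 4] i ≠ 0) ∧
      ∀ W : L,
        B (![b 0, b 1, b 2 + b 3,
             b 2 - (1 / 2 : ℝ) • b 3 + (Real.sqrt 3 / 2) • b 4,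
             b 2 - (1 / 2 : ℝ) • b 3 - (Real.sqrt 3 / 2) • b 4] i)
          ⁅![b 0, b 1, b 2 + b 3,
             b 2 - (1 / 2 : ℝ) • b 3 + (Real.sqrt 3 / 2) • b 4,
             b 2 - (1 / 2 : ℝ) • b 3 - (Real.sqrt 3 / 2) • b 4] i, W⁆ = 0 := by
  have hX : G35Brackets ⇑b := ⟨h12, habel, h13, h14, h15, h23, h24, h25⟩
  have hB : ∀ i j, B (g35Frame ⇑b i) (g35Frame ⇑b j) = if i = j then 1 else 0 := horth
  have hne : ∀ i, g35Frame ⇑b i ≠ 0 := fun i h => by simpa [h] using hB i i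
  have hlin : LinearIndependent ℝ (g35Frame ⇑b) :=
    LinearMap.BilinForm.linearIndependent_of_iIsOrtho
      (fun i j hij => (hB i j).trans (if_neg hij)) (fun i => by simp [hB])
  have hspan : span ℝ (Set.range (g35Frame ⇑b)) = ⊤ :=
    hlin.span_eq_top_of_card_eq_finrank (by simp [Module.finrank_eq_card_basis b])
  refine ⟨hlin, hspan, fun i => isGeodesicVector_of_span_eq_top (hne i) hspan ?_⟩
  rintro _ ⟨j, rfl⟩
  exact hX.apply_lie_g35Frame hB i j

/-- In the 5-dimensional unimodular Lie algebra `g₃₅` (basis `X₁,…,X₅`, abelian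
nilradical `n = Span(X₃,X₄,X₅)`, `[X₁,X₂]=0`, `ad X₁|_n = diag(−2,1,1)`,
`[X₂,X₄] = −X₅`, `[X₂,X₅] = X₄`, `[X₂,X₃]=0`), under the inner product making
`X₁, X₂, Y₃ = X₃+X₄, Y₄ = X₃ − ½X₄ + (√3/2)X₅, Y₅ = X₃ − ½X₄ − (√3/2)X₅`
orthonormal, these five vectors form a geodesic basis. -/
theorem g35_geodesic_basis
    {L : Type*} [LieRing L] [LieAlgebra ℝ L]
    (b : Module.Basis (Fin 5) ℝ L)
    (h12 : ⁅b 0, b 1⁆ = (0 : L))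
    (habel : ∀ i j : Fin 5, 2 ≤ (i : ℕ) → 2 ≤ (j : ℕ) → ⁅b i, b j⁆ = (0 : L))
    (h13 : ⁅b 0, b 2⁆ = (-2 : ℝ) • b 2) (h14 : ⁅b 0, b 3⁆ = b 3)
    (h15 : ⁅b 0, b 4⁆ = b 4)
    (h23 : ⁅b 1, b 2⁆ = (0 : L)) (h24 : ⁅b 1, b 3⁆ = -b 4)
    (h25 : ⁅b 1, b 4⁆ = b 3)
    (B : L →ₗ[ℝ] L →ₗ[ℝ] ℝ)
    (hsymm : ∀ x y : L, B x y = B y x)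
    (hpos : ∀ x : L, x ≠ 0 → 0 < B x x)
    (horth : ∀ i j : Fin 5,
      B (![b 0, b 1, b 2 + b 3,
           b 2 - (1 / 2 : ℝ) • b 3 + (Real.sqrt 3 / 2) • b 4,
           b 2 - (1 / 2 : ℝ) • b 3 - (Real.sqrt 3 / 2) • b 4] i)
        (![b 0, b 1, b 2 + b 3,
           b 2 - (1 / 2 : ℝ) • b 3 + (Real.sqrt 3 / 2) • b 4,
           b 2 - (1 / 2 : ℝ) • b 3 - (Real.sqrt 3 / 2) • b 4] j)
        = if i = j then (1 : ℝ) else 0) :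
    LinearIndependent ℝ
      ![b 0, b 1, b 2 + b 3,
        b 2 - (1 / 2 : ℝ) • b 3 + (Real.sqrt 3 / 2) • b 4,
        b 2 - (1 / 2 : ℝ) • b 3 - (Real.sqrt 3 / 2) • b 4] ∧
    Submodule.span ℝ
      (Set.range ![b 0, b 1, b 2 + b 3,
        b 2 - (1 / 2 : ℝ) • b 3 + (Real.sqrt 3 / 2) • b 4,
        b 2 - (1 / 2 : ℝ) • b 3 - (Real.sqrt 3 / 2) • b 4]) = ⊤ ∧
    ∀ i : Fin 5,
      (![b 0, b 1, b 2 + b 3,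
         b 2 - (1 / 2 : ℝ) • b 3 + (Real.sqrt 3 / 2) • b 4,
         b 2 - (1 / 2 : ℝ) • b 3 - (Real.sqrt 3 / 2) • b 4] i ≠ 0) ∧
      ∀ W : L,
        B (![b 0, b 1, b 2 + b 3,
             b 2 - (1 / 2 : ℝ) • b 3 + (Real.sqrt 3 / 2) • b 4,
             b 2 - (1 / 2 : ℝ) • b 3 - (Real.sqrt 3 / 2) • b 4] i)
          ⁅![b 0, b 1, b 2 + b 3,
             b 2 - (1 / 2 : ℝ) • b 3 + (Real.sqrt 3 / 2) • b 4,
             b 2 - (1 / 2 : ℝ) • b 3 - (Real.sqrt 3 / 2) • b 4] i, W⁆ = 0 :=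
  g35_geodesic_basis_general b h12 habel h13 h14 h15 h23 h24 h25 B horth
end
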